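/- arXiv:1105.0724 — 13 statements merged into one kernel-verified Lean document; each statement's English description precedes it below -/
import Mathlib

section
/- Let q0 : {0,…,r}² → ℂ satisfy (i+1)·q0(i+1,j) + (j+1)·q0(i,j+1) = 0 and (2r − 2i − 2j − n)·q0(i,j) = 0 for all 0 ≤ i,j ≤ r (terms with an index out of range interpreted as 0). Then there exists a unique coefficient family (q_k)_{0≤k≤n} whose level-0 component is q0; moreover this family satisfies q_k(i,j) = q_k(j,i) for all k,i,j if and only if q0(i,j) = q0(j,i) for all i,j. -/
open Finset

noncomputable section

/-- `famN r m = 2r - 4m`, the highest weight `n` of the target representation. -/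
def famN (r m : ℕ) : ℤ := 2 * (r : ℤ) - 4 * (m : ℤ)

/-- A *coefficient family* for parameters `r, m`: a function `q k i j` (complex valued,
indices integers) that vanishes whenever `(k,i,j)` is out of range
(`0 ≤ k ≤ n`, `0 ≤ i,j ≤ r`, where `n = 2r - 4m`) and satisfies the sl₂-compatibility
relations (R1), (R2), (R3) for all admissible indices. -/
def IsCoeffFamily (r m : ℕ) (q : ℤ → ℤ → ℤ → ℂ) : Prop :=
  (∀ k i j : ℤ,
      ¬(0 ≤ k ∧ k ≤ famN r m ∧ 0 ≤ i ∧ i ≤ (r : ℤ) ∧ 0 ≤ j ∧ j ≤ (r : ℤ)) →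
      q k i j = 0) ∧
  (∀ k i j : ℤ, 0 ≤ k → k ≤ famN r m → 0 ≤ i → i ≤ (r : ℤ) → 0 ≤ j → j ≤ (r : ℤ) →
      (k : ℂ) * q (k - 1) i j
        = ((i : ℂ) + 1) * q k (i + 1) j + ((j : ℂ) + 1) * q k i (j + 1)) ∧
  (∀ k i j : ℤ, 0 ≤ k → k ≤ famN r m → 0 ≤ i → i ≤ (r : ℤ) → 0 ≤ j → j ≤ (r : ℤ) →
      ((famN r m - k : ℤ) : ℂ) * q (k + 1) i j
        = (((r : ℤ) - i + 1 : ℤ) : ℂ) * q k (i - 1) j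
          + (((r : ℤ) - j + 1 : ℤ) : ℂ) * q k i (j - 1)) ∧
  (∀ k i j : ℤ, 0 ≤ k → k ≤ famN r m → 0 ≤ i → i ≤ (r : ℤ) → 0 ≤ j → j ≤ (r : ℤ) →
      ((famN r m - 2 * k - 2 * (r : ℤ) + 2 * i + 2 * j : ℤ) : ℂ) * q k i j = 0)

/-- Binomial coefficient `binom a b` for integers, interpreted as `0` when `b` is out of
the range `0 ≤ b ≤ a`, as a complex number. -/
def binomZ (a b : ℤ) : ℂ :=
  if 0 ≤ b ∧ b ≤ a then (Nat.choose a.toNat b.toNat : ℂ) else 0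

/-- The *canonical coefficient family* with parameter `λ`: the coefficient family whose
level-0 component is `q₀ i j = (-1)^i * binom (2m) i * λ` if `i + j = 2m` and `0`
otherwise. -/
def IsCanonical (r m : ℕ) (lam : ℂ) (q : ℤ → ℤ → ℤ → ℂ) : Prop :=
  IsCoeffFamily r m q ∧
  ∀ i j : ℤ, 0 ≤ i → i ≤ (r : ℤ) → 0 ≤ j → j ≤ (r : ℤ) →
    q 0 i j =
      if i + j = 2 * (m : ℤ) then (-1) ^ i.toNat * binomZ (2 * (m : ℤ)) i * lam else 0

/-!
By (R2), `(n - k) q_{k+1} = Y q_k` for `k < n`, so a coefficient family is determined by `q_0`;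
this gives uniqueness, and the symmetry statement follows because swapping `i` and `j` preserves
(R1)–(R3). For existence put `q_{k+1} = Y q_k / (n - k)`. The weight condition puts `q_0` on the
diagonal `i + j = 2m`, so `q_k` lives on `i + j = 2m + k`, which is (R3); the commutator
`[X, Y] = H` then propagates `X q_0 = 0` to (R1). The remaining case `k = n` of (R2) says
`Y q_n = 0`: this array lives on the diagonal `i + j = 2r - 2m + 1 > r` inside the box and is
killed by `X`, and such an array vanishes, column by column from `i = r + 1` downwards.
-/

/- `opX (q k)` and `opY r (q k)` are the right-hand sides of (R1) and (R2). -/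
def opX (f : ℤ → ℤ → ℂ) (i j : ℤ) : ℂ :=
  ((i : ℂ) + 1) * f (i + 1) j + ((j : ℂ) + 1) * f i (j + 1)

def opY (r : ℕ) (f : ℤ → ℤ → ℂ) (i j : ℤ) : ℂ :=
  (((r : ℤ) - i + 1 : ℤ) : ℂ) * f (i - 1) j + (((r : ℤ) - j + 1 : ℤ) : ℂ) * f i (j - 1)

def opH (r : ℕ) (f : ℤ → ℤ → ℂ) (i j : ℤ) : ℂ :=
  ((2 * (r : ℤ) - 2 * i - 2 * j : ℤ) : ℂ) * f i j

theorem opX_smul (c : ℂ) (f : ℤ → ℤ → ℂ) : opX (c • f) = c • opX f := by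
  ext i j
  simp only [opX, Pi.smul_apply, smul_eq_mul]
  ring

theorem opY_smul (r : ℕ) (c : ℂ) (f : ℤ → ℤ → ℂ) : opY r (c • f) = c • opY r f := by
  ext i j
  simp only [opY, Pi.smul_apply, smul_eq_mul]
  ring

theorem opX_opY (r : ℕ) (f : ℤ → ℤ → ℂ) : opX (opY r f) = opY r (opX f) + opH r f := by
  ext i j
  simp only [opX, opY, opH, Pi.add_apply, add_sub_cancel_right, sub_add_cancel]
  push_cast
  ring

theorem opX_eq_zero_of_box {r : ℕ} {f : ℤ → ℤ → ℂ}
    (hbox : ∀ i j : ℤ, ¬(0 ≤ i ∧ i ≤ (r : ℤ) ∧ 0 ≤ j ∧ j ≤ (r : ℤ)) → f i j = 0)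
    (hX : ∀ i j : ℤ, 0 ≤ i → i ≤ (r : ℤ) → 0 ≤ j → j ≤ (r : ℤ) → opX f i j = 0) :
    opX f = 0 := by
  ext i j
  by_cases hij : 0 ≤ i ∧ i ≤ (r : ℤ) ∧ 0 ≤ j ∧ j ≤ (r : ℤ)
  · exact hX i j hij.1 hij.2.1 hij.2.2.1 hij.2.2.2
  · have hi : ((i : ℂ) + 1) * f (i + 1) j = 0 := by
      by_cases h : i = -1
      · simp [h]
      · exact mul_eq_zero_of_right _ (hbox _ _ (by omega))
    have hj : ((j : ℂ) + 1) * f i (j + 1) = 0 := by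
      by_cases h : j = -1
      · simp [h]
      · exact mul_eq_zero_of_right _ (hbox _ _ (by omega))
    simp [opX, hi, hj]

def IsSupportedOnDiag (r : ℕ) (s : ℤ) (f : ℤ → ℤ → ℂ) : Prop :=
  ∀ i j : ℤ, f i j ≠ 0 → 0 ≤ i ∧ i ≤ (r : ℤ) ∧ 0 ≤ j ∧ j ≤ (r : ℤ) ∧ i + j = s

namespace IsSupportedOnDiag

variable {r : ℕ} {s : ℤ} {f : ℤ → ℤ → ℂ}

theorem smul (hf : IsSupportedOnDiag r s f) (c : ℂ) : IsSupportedOnDiag r s (c • f) :=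
  fun i j h => hf i j (right_ne_zero_of_mul h)

theorem opY (hf : IsSupportedOnDiag r s f) : IsSupportedOnDiag r (s + 1) (_root_.opY r f) := by
  intro i j h
  rcases ne_or_eq ((((r : ℤ) - i + 1 : ℤ) : ℂ) * f (i - 1) j) 0 with h₁ | h₁
  · have hi : (r : ℤ) - i + 1 ≠ 0 := Int.cast_ne_zero.mp (left_ne_zero_of_mul h₁)
    have := hf _ _ (right_ne_zero_of_mul h₁)
    omega
  · have h₂ : (((r : ℤ) - j + 1 : ℤ) : ℂ) * f i (j - 1) ≠ 0 := by
      rwa [_root_.opY, h₁, zero_add] at h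
    have hj : (r : ℤ) - j + 1 ≠ 0 := Int.cast_ne_zero.mp (left_ne_zero_of_mul h₂)
    have := hf _ _ (right_ne_zero_of_mul h₂)
    omega

theorem opH (hf : IsSupportedOnDiag r s f) : opH r f = ((2 * (r : ℤ) - 2 * s : ℤ) : ℂ) • f := by
  ext i j
  by_cases h : f i j = 0
  · simp [_root_.opH, h]
  · obtain ⟨-, -, -, -, hij⟩ := hf i j h
    simp only [_root_.opH, Pi.smul_apply, smul_eq_mul, ← hij]
    ring_nf

theorem eq_zero_of_opX_eq_zero (hf : IsSupportedOnDiag r s f) (hs : (r : ℤ) < s)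
    (hX : opX f = 0) : f = 0 := by
  have hcol : ∀ i ≤ (r : ℤ) + 1, ∀ j, f i j = 0 := by
    refine Int.leInductionDown (fun j => ?_) fun i _ ih j => ?_
    · by_contra h
      have := hf _ _ h
      omega
    · by_contra h
      obtain ⟨-, -, -, -, hij⟩ := hf _ _ h
      have hXij : ((i - 1 : ℤ) + 1 : ℂ) * f i (j - 1) + (j : ℂ) * f (i - 1) j = 0 := by
        simpa [opX] using congrFun (congrFun hX (i - 1)) (j - 1)
      rw [ih, mul_zero, zero_add] at hXij
      exact h ((mul_eq_zero.mp hXij).resolve_left (Int.cast_ne_zero.mpr (by omega)))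
  ext i j
  by_cases hi : i ≤ (r : ℤ) + 1
  · exact hcol i hi j
  · by_contra h
    have := hf _ _ h
    omega

end IsSupportedOnDiag

def ladder (r : ℕ) (n : ℤ) (f : ℤ → ℤ → ℂ) : ℕ → ℤ → ℤ → ℂ
  | 0 => f
  | k + 1 => ((n - k : ℤ) : ℂ)⁻¹ • opY r (ladder r n f k)

section Ladder

variable {r : ℕ} {n s : ℤ} {f : ℤ → ℤ → ℂ}

theorem smul_ladder_succ {k : ℕ} (hk : (k : ℤ) < n) :
    ((n - k : ℤ) : ℂ) • ladder r n f (k + 1) = opY r (ladder r n f k) :=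
  smul_inv_smul₀ (Int.cast_ne_zero.mpr (by omega)) _

theorem IsSupportedOnDiag.ladder (hf : IsSupportedOnDiag r s f) (k : ℕ) :
    IsSupportedOnDiag r (s + k) (ladder r n f k) := by
  induction k with
  | zero => simpa [_root_.ladder] using hf
  | succ k ih => simpa [_root_.ladder, add_assoc] using ih.opY.smul _

theorem natCast_smul_opY_ladder_pred {k : ℕ} (hk : (k : ℤ) ≤ n) :
    (k : ℂ) • opY r (ladder r n f (k - 1)) = ((k * (n - k + 1) : ℤ) : ℂ) • ladder r n f k := by
  cases k with
  | zero => simp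
  | succ k =>
    rw [Nat.add_sub_cancel, ← smul_ladder_succ (by omega), smul_smul]
    push_cast
    ring_nf

variable (hf : IsSupportedOnDiag r s f) (hX : opX f = 0) (hn : n = 2 * r - 2 * s)
include hf hX hn

theorem opX_ladder {k : ℕ} (hk : (k : ℤ) ≤ n) :
    opX (ladder r n f k) = (k : ℂ) • ladder r n f (k - 1) := by
  induction k with
  | zero => simpa [ladder] using hX
  | succ k ih =>
    have hk' : ((n - k : ℤ) : ℂ) ≠ 0 := Int.cast_ne_zero.mpr (by omega)
    rw [Nat.add_sub_cancel, ← inv_smul_smul₀ hk' (opX _), ← opX_smul, smul_ladder_succ (by omega),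
      opX_opY, ih (by omega), opY_smul, natCast_smul_opY_ladder_pred (by omega),
      (hf.ladder k).opH, ← add_smul, smul_smul]
    congr 1
    field_simp
    rw [hn]
    push_cast
    ring

theorem opY_ladder_toNat (hs : s ≤ r) : opY r (ladder r n f n.toNat) = 0 := by
  have hN : (n.toNat : ℤ) = n := Int.toNat_of_nonneg (by omega)
  refine (hf.ladder n.toNat).opY.eq_zero_of_opX_eq_zero (by omega) ?_
  rw [opX_opY, opX_ladder hf hX hn hN.le, opY_smul, natCast_smul_opY_ladder_pred hN.le,
    (hf.ladder _).opH, ← add_smul, hN]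
  convert zero_smul ℂ _
  rw [hn]
  push_cast
  ring

end Ladder

def ladderFamily (r : ℕ) (n : ℤ) (f : ℤ → ℤ → ℂ) (k : ℤ) : ℤ → ℤ → ℂ :=
  if 0 ≤ k ∧ k ≤ n then ladder r n f k.toNat else 0

theorem ladderFamily_natCast {r : ℕ} {n : ℤ} {f : ℤ → ℤ → ℂ} {k : ℕ} (hk : (k : ℤ) ≤ n) :
    ladderFamily r n f k = ladder r n f k := by
  simp [ladderFamily, hk]

theorem isSupportedOnDiag_of_weight {r m : ℕ} {f : ℤ → ℤ → ℂ}
    (hbox : ∀ i j : ℤ, ¬(0 ≤ i ∧ i ≤ (r : ℤ) ∧ 0 ≤ j ∧ j ≤ (r : ℤ)) → f i j = 0)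
    (hwt : ∀ i j : ℤ, 0 ≤ i → i ≤ (r : ℤ) → 0 ≤ j → j ≤ (r : ℤ) →
      ((2 * (r : ℤ) - 2 * i - 2 * j - famN r m : ℤ) : ℂ) * f i j = 0) :
    IsSupportedOnDiag r (2 * m) f := by
  intro i j h
  by_cases hij : 0 ≤ i ∧ i ≤ (r : ℤ) ∧ 0 ≤ j ∧ j ≤ (r : ℤ)
  · have hw : 2 * (r : ℤ) - 2 * i - 2 * j - famN r m = 0 := Int.cast_eq_zero.mp
      ((mul_eq_zero.mp (hwt i j hij.1 hij.2.1 hij.2.2.1 hij.2.2.2)).resolve_right h)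
    unfold famN at hw
    omega
  · exact absurd (hbox i j hij) h

theorem isCoeffFamily_ladderFamily {r m : ℕ} {f : ℤ → ℤ → ℂ} (hm : 2 * m ≤ r)
    (hf : IsSupportedOnDiag r (2 * m) f) (hX : opX f = 0) :
    IsCoeffFamily r m (ladderFamily r (famN r m) f) := by
  have hn : famN r m = 2 * r - 2 * (2 * m : ℤ) := by unfold famN; ring
  refine ⟨fun k i j h => ?_, fun k i j hk0 hkn _ _ _ _ => ?_,
    fun k i j hk0 hkn _ _ _ _ => ?_, fun k i j hk0 hkn _ _ _ _ => ?_⟩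
  · unfold ladderFamily
    split_ifs with hk
    · by_contra h'
      have := hf.ladder k.toNat i j h'
      exact h ⟨hk.1, hk.2, by omega⟩
    · rfl
  all_goals lift k to ℕ using hk0
  · change (k : ℂ) * _ = opX (ladderFamily r (famN r m) f k) i j
    rw [ladderFamily_natCast hkn, opX_ladder hf hX hn hkn]
    cases k with
    | zero => simp
    | succ k =>
      rw [show ((k + 1 : ℕ) : ℤ) - 1 = k by push_cast; ring, ladderFamily_natCast (by omega)]
      simp
  · change _ = opY r (ladderFamily r (famN r m) f k) i j
    rw [ladderFamily_natCast hkn]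
    rcases hkn.lt_or_eq with hk | hk
    · rw [show (k : ℤ) + 1 = (k + 1 : ℕ) by push_cast; ring, ladderFamily_natCast hk]
      exact congrFun (congrFun (smul_ladder_succ hk) i) j
    · have htop := opY_ladder_toNat (r := r) hf hX hn (by omega)
      rw [show (famN r m).toNat = k by omega] at htop
      simp [htop, hk]
  · rw [ladderFamily_natCast hkn]
    by_cases h : ladder r (famN r m) f k i j = 0
    · simp [h]
    · obtain ⟨-, -, -, -, hij⟩ := hf.ladder k i j h
      rw [show famN r m - 2 * k - 2 * r + 2 * i + 2 * j = 0 by omega]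
      simp

namespace IsCoeffFamily

variable {r m : ℕ} {q q' : ℤ → ℤ → ℤ → ℂ}

theorem ext (hq : IsCoeffFamily r m q) (hq' : IsCoeffFamily r m q')
    (h0 : ∀ i j : ℤ, q 0 i j = q' 0 i j) : q = q' := by
  have hnat : ∀ k : ℕ, ∀ i j : ℤ, q k i j = q' k i j := by
    intro k
    induction k with
    | zero => exact h0
    | succ k ih =>
      intro i j
      push_cast
      by_cases h : (k : ℤ) < famN r m ∧ 0 ≤ i ∧ i ≤ (r : ℤ) ∧ 0 ≤ j ∧ j ≤ (r : ℤ)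
      · obtain ⟨hk, hi0, hir, hj0, hjr⟩ := h
        have hne : ((famN r m - k : ℤ) : ℂ) ≠ 0 := Int.cast_ne_zero.mpr (by omega)
        apply mul_left_cancel₀ hne
        rw [hq.2.2.1 k i j k.cast_nonneg hk.le hi0 hir hj0 hjr,
          hq'.2.2.1 k i j k.cast_nonneg hk.le hi0 hir hj0 hjr, ih, ih]
      · rw [hq.1 _ i j (by omega), hq'.1 _ i j (by omega)]
  funext k i j
  rcases lt_or_ge k 0 with hk | hk
  · rw [hq.1 k i j (by omega), hq'.1 k i j (by omega)]
  · lift k to ℕ using hk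
    exact hnat k i j

theorem swap (hq : IsCoeffFamily r m q) : IsCoeffFamily r m (fun k i j => q k j i) := by
  obtain ⟨hrange, hR1, hR2, hR3⟩ := hq
  refine ⟨fun k i j h => hrange k j i (by omega), fun k i j hk0 hkn hi0 hir hj0 hjr => ?_,
    fun k i j hk0 hkn hi0 hir hj0 hjr => ?_, fun k i j hk0 hkn hi0 hir hj0 hjr => ?_⟩
  · rw [hR1 k j i hk0 hkn hj0 hjr hi0 hir, add_comm]
  · rw [hR2 k j i hk0 hkn hj0 hjr hi0 hir, add_comm]
  · rw [← hR3 k j i hk0 hkn hj0 hjr hi0 hir]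
    ring_nf

end IsCoeffFamily

theorem stmt0_general (r m : ℕ) (hm : 2 * m ≤ r)
    (q0 : ℤ → ℤ → ℂ)
    (hq0range : ∀ i j : ℤ, ¬(0 ≤ i ∧ i ≤ (r : ℤ) ∧ 0 ≤ j ∧ j ≤ (r : ℤ)) → q0 i j = 0)
    (hq0rec : ∀ i j : ℤ, 0 ≤ i → i ≤ (r : ℤ) → 0 ≤ j → j ≤ (r : ℤ) →
      ((i : ℂ) + 1) * q0 (i + 1) j + ((j : ℂ) + 1) * q0 i (j + 1) = 0)
    (hq0wt : ∀ i j : ℤ, 0 ≤ i → i ≤ (r : ℤ) → 0 ≤ j → j ≤ (r : ℤ) →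
      ((2 * (r : ℤ) - 2 * i - 2 * j - famN r m : ℤ) : ℂ) * q0 i j = 0) :
    (∃! q : ℤ → ℤ → ℤ → ℂ, IsCoeffFamily r m q ∧ ∀ i j : ℤ, q 0 i j = q0 i j) ∧
    (∀ q : ℤ → ℤ → ℤ → ℂ, IsCoeffFamily r m q → (∀ i j : ℤ, q 0 i j = q0 i j) →
      ((∀ k i j : ℤ, q k i j = q k j i) ↔ (∀ i j : ℤ, q0 i j = q0 j i))) := by
  have hfam := isCoeffFamily_ladderFamily hm (isSupportedOnDiag_of_weight hq0range hq0wt)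
    (opX_eq_zero_of_box hq0range hq0rec)
  have hlevel0 : ∀ i j : ℤ, ladderFamily r (famN r m) q0 0 i j = q0 i j := fun i j => by
    rw [← Nat.cast_zero, ladderFamily_natCast (by unfold famN; omega), ladder]
  refine ⟨⟨_, ⟨hfam, hlevel0⟩, fun q ⟨hq, hq0⟩ => hq.ext hfam fun i j => by rw [hq0, hlevel0]⟩,
    fun q hq hq0 => ⟨fun hsym i j => by rw [← hq0, ← hq0, hsym], fun hsym => ?_⟩⟩
  have hswap : (fun k i j => q k j i) = q := hq.swap.ext hq fun i j => by rw [hq0, hq0, hsym]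
  exact fun k i j => (congrFun (congrFun (congrFun hswap k) i) j).symm

/-- existence and uniqueness of the coefficient family extending a given
level-0 component `q0`, together with the symmetry equivalence. -/
theorem stmt0 (r m : ℕ) (hr : 2 ≤ r) (hm : 2 * m ≤ r)
    (q0 : ℤ → ℤ → ℂ)
    (hq0range : ∀ i j : ℤ, ¬(0 ≤ i ∧ i ≤ (r : ℤ) ∧ 0 ≤ j ∧ j ≤ (r : ℤ)) → q0 i j = 0)
    (hq0rec : ∀ i j : ℤ, 0 ≤ i → i ≤ (r : ℤ) → 0 ≤ j → j ≤ (r : ℤ) →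
      ((i : ℂ) + 1) * q0 (i + 1) j + ((j : ℂ) + 1) * q0 i (j + 1) = 0)
    (hq0wt : ∀ i j : ℤ, 0 ≤ i → i ≤ (r : ℤ) → 0 ≤ j → j ≤ (r : ℤ) →
      ((2 * (r : ℤ) - 2 * i - 2 * j - famN r m : ℤ) : ℂ) * q0 i j = 0) :
    (∃! q : ℤ → ℤ → ℤ → ℂ, IsCoeffFamily r m q ∧ ∀ i j : ℤ, q 0 i j = q0 i j) ∧
    (∀ q : ℤ → ℤ → ℤ → ℂ, IsCoeffFamily r m q → (∀ i j : ℤ, q 0 i j = q0 i j) →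
      ((∀ k i j : ℤ, q k i j = q k j i) ↔ (∀ i j : ℤ, q0 i j = q0 j i))) :=
  stmt0_general r m hm q0 hq0range hq0rec hq0wt
end
end

section
/- Let q0 : {0,…,r}² → ℂ satisfy (i+1)·q0(i+1,j) + (j+1)·q0(i,j+1) = 0 and (2r − 2i − 2j − n)·q0(i,j) = 0 for all 0 ≤ i,j ≤ r (terms with an index out of range interpreted as 0), where n = 2r − 4m. Then, with λ := q0(0,2m), one has q0(i,j) = (−1)^i·binom(2m,i)·λ whenever i + j = 2m, and q0(i,j) = 0 whenever i + j ≠ 2m. -/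
open Finset

noncomputable section

/-- explicit form of a level-0 component `q0`. -/
theorem stmt1 (r m : ℕ) (hr : 2 ≤ r) (hm : 2 * m ≤ r)
    (q0 : ℤ → ℤ → ℂ)
    (hq0range : ∀ i j : ℤ, ¬(0 ≤ i ∧ i ≤ (r : ℤ) ∧ 0 ≤ j ∧ j ≤ (r : ℤ)) → q0 i j = 0)
    (hq0rec : ∀ i j : ℤ, 0 ≤ i → i ≤ (r : ℤ) → 0 ≤ j → j ≤ (r : ℤ) →
      ((i : ℂ) + 1) * q0 (i + 1) j + ((j : ℂ) + 1) * q0 i (j + 1) = 0)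
    (hq0wt : ∀ i j : ℤ, 0 ≤ i → i ≤ (r : ℤ) → 0 ≤ j → j ≤ (r : ℤ) →
      ((2 * (r : ℤ) - 2 * i - 2 * j - famN r m : ℤ) : ℂ) * q0 i j = 0) :
    ∀ i j : ℤ, 0 ≤ i → i ≤ (r : ℤ) → 0 ≤ j → j ≤ (r : ℤ) →
      (i + j = 2 * (m : ℤ) →
        q0 i j = (-1) ^ i.toNat * binomZ (2 * (m : ℤ)) i * q0 0 (2 * (m : ℤ))) ∧
      (i + j ≠ 2 * (m : ℤ) → q0 i j = 0) := by
  have hmr : 2 * (m:ℤ) ≤ (r:ℤ) := by exact_mod_cast hm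
  have hvan : ∀ i j : ℤ, 0 ≤ i → i ≤ (r:ℤ) → 0 ≤ j → j ≤ (r:ℤ) →
      i + j ≠ 2 * (m:ℤ) → q0 i j = 0 := by
    intro i j h1 h2 h3 h4 hne
    have h := hq0wt i j h1 h2 h3 h4
    rcases mul_eq_zero.mp h with h | h
    · exfalso
      rw [Int.cast_eq_zero] at h
      simp only [famN] at h
      omega
    · exact h
  have key : ∀ i : ℕ, (i:ℤ) ≤ 2*m →
      q0 (i:ℤ) (2*(m:ℤ) - i) = (-1)^i * (Nat.choose (2*m) i : ℂ) * q0 0 (2*(m:ℤ)) := by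
    intro i
    induction i with
    | zero => intro _; simp
    | succ i ih =>
      intro hi
      have hi' : (i:ℤ) ≤ 2*m := by push_cast at hi; omega
      have hrec := hq0rec (i:ℤ) (2*(m:ℤ) - ((i:ℤ)+1)) (Int.natCast_nonneg i)
        (by omega) (by push_cast at hi; omega) (by omega)
      rw [show (2*(m:ℤ) - ((i:ℤ)+1)) + 1 = 2*(m:ℤ) - i from by ring, ih hi'] at hrec
      push_cast at hrec
      have hne : ((i:ℂ) + 1) ≠ 0 := Nat.cast_add_one_ne_zero i
      have hle : i ≤ 2*m := by exact_mod_cast hi'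
      have hchoose : ((i:ℂ)+1) * (Nat.choose (2*m) (i+1) : ℂ)
          = (2*(m:ℂ) - i) * (Nat.choose (2*m) i : ℂ) := by
        have h2 := Nat.choose_succ_right_eq (2*m) i
        have h3 : ((Nat.choose (2*m) (i+1) * (i+1) : ℕ) : ℂ)
            = ((Nat.choose (2*m) i * (2*m - i) : ℕ) : ℂ) := by exact_mod_cast h2
        push_cast [Nat.cast_sub hle] at h3
        linear_combination h3
      apply mul_left_cancel₀ hne
      push_cast
      linear_combination hrec + (-1:ℂ)^i * q0 0 (2*(m:ℤ)) * hchoose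
  intro i j h1 h2 h3 h4
  constructor
  · intro hij
    lift i to ℕ using h1 with i'
    have hj : j = 2*(m:ℤ) - i' := by omega
    subst hj
    have hi2m : (i':ℤ) ≤ 2*m := by omega
    rw [key i' hi2m]
    have hb : binomZ (2*(m:ℤ)) (i':ℤ) = (Nat.choose (2*m) i' : ℂ) := by
      rw [binomZ, if_pos ⟨Int.natCast_nonneg i', hi2m⟩,
        show (2*(m:ℤ)) = ((2*m : ℕ) : ℤ) by push_cast; ring,
        Int.toNat_natCast, Int.toNat_natCast]
    rw [hb, Int.toNat_natCast]
  · intro hij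
    exact hvan i j h1 h2 h3 h4 hij
end
end

section
/- Let q be a coefficient family and set λ = q_0(0,2m). Then for all integers k, i with 0 ≤ k ≤ n/2, 0 ≤ i ≤ r and j := 2m + k − i satisfying 0 ≤ j ≤ r, one has binom(n,k)·q_k(i,j) = λ · Σ_{s = max(0, i−k)}^{min(2m, i)} (−1)^s · binom(2m,s) · binom(r−s, r−i) · binom(r−2m+s, r−j). -/
/-! Multiplying (R2) by `binom(n,k)` and using `(k+1)·binom(n,k+1) = (n-k)·binom(n,k)` turns it
into a first-order recurrence in `k` for `binom(n,k)·q_k(i, 2m+k-i)`, whose level-zero values are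
forced by (R1) at `k = 0` to be `(-1)^i·binom(2m,i)·λ`. The closed sum obeys the same recurrence
summand by summand: each summand is a product of two binomials with lower indices `r-i` and `r-j`,
and `(b+1)·binom(a,b+1) = (a-b)·binom(a,b)` applied to both factors gives the weights `r-i+1` and
`r-j+1` of (R2). The closed sum is taken over all `0 ≤ s ≤ 2m`: the summands outside the range
`max(0, i-k) ≤ s ≤ min(2m, i)` vanish. -/

open Finset

noncomputable section

lemma binomZ_of_neg {a b : ℤ} (h : b < 0) : binomZ a b = 0 :=
  if_neg fun hb => h.not_ge hb.1

lemma binomZ_of_lt {a b : ℤ} (h : a < b) : binomZ a b = 0 :=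
  if_neg fun hb => h.not_ge hb.2

lemma binomZ_natCast (A B : ℕ) : binomZ A B = A.choose B := by
  by_cases h : B ≤ A
  · simp [binomZ, h]
  · rw [binomZ_of_lt (by omega), Nat.choose_eq_zero_of_lt (by omega), Nat.cast_zero]

lemma binomZ_self {a : ℤ} (h : 0 ≤ a) : binomZ a a = 1 := by
  simp [binomZ, h]

lemma binomZ_zero_right {a : ℤ} (h : 0 ≤ a) : binomZ a 0 = 1 := by
  simp [binomZ, h]

lemma add_one_mul_binomZ_add_one (a b : ℤ) :
    ((b : ℂ) + 1) * binomZ a (b + 1) = ((a - b : ℤ) : ℂ) * binomZ a b := by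
  rcases lt_or_ge a 0 with ha | ha
  · have hvanish (c : ℤ) : binomZ a c = 0 := if_neg fun hc => by omega
    rw [hvanish, hvanish]; ring
  rcases lt_or_ge b 0 with hb | hb
  · rw [binomZ_of_neg hb]
    obtain hb' | hb' := lt_or_eq_of_le (show b + 1 ≤ 0 by omega)
    · rw [binomZ_of_neg hb']; ring
    · rw [show (b : ℂ) + 1 = 0 by exact_mod_cast hb']; ring
  lift a to ℕ using ha
  lift b to ℕ using hb
  rw [show (b : ℤ) + 1 = ((b + 1 : ℕ) : ℤ) by push_cast; ring, binomZ_natCast, binomZ_natCast]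
  rcases le_or_gt b a with hba | hab
  · have := congrArg (Nat.cast (R := ℂ)) (Nat.choose_succ_right_eq a b)
    push_cast [Nat.cast_sub hba] at this ⊢
    linear_combination this
  · rw [Nat.choose_eq_zero_of_lt hab, Nat.choose_eq_zero_of_lt (by omega)]; simp

lemma two_mul_le_of_famN_nonneg {r m : ℕ} (hn : 0 ≤ famN r m) : 2 * (m : ℤ) ≤ r := by
  unfold famN at hn; omega

section ClosedFormula

variable (r m : ℕ)

def closedTerm (k i s : ℤ) : ℂ :=
  (-1) ^ s.toNat * binomZ (2 * (m : ℤ)) s *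
    binomZ ((r : ℤ) - s) ((r : ℤ) - i) *
    binomZ ((r : ℤ) - 2 * (m : ℤ) + s) ((r : ℤ) - (2 * (m : ℤ) + k - i))

def closedSum (k i : ℤ) : ℂ :=
  ∑ s ∈ Icc 0 (2 * (m : ℤ)), closedTerm r m k i s

variable {r m}

lemma closedTerm_eq_zero_of_lt_or_lt {k i s : ℤ} (h : s < i - k ∨ i < s) :
    closedTerm r m k i s = 0 := by
  rcases h with h | h
  · rw [closedTerm, binomZ_of_lt (a := (r : ℤ) - 2 * m + s) (by omega), mul_zero]
  · rw [closedTerm, binomZ_of_lt (a := (r : ℤ) - s) (by omega), mul_zero, zero_mul]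

lemma closedSum_eq_sum_Icc_max_min (k i : ℤ) :
    closedSum r m k i = ∑ s ∈ Icc (max 0 (i - k)) (min (2 * (m : ℤ)) i), closedTerm r m k i s := by
  refine (sum_subset (Icc_subset_Icc (le_max_left _ _) (min_le_left _ _)) fun s hs₀ hs => ?_).symm
  rw [mem_Icc] at hs₀
  rw [mem_Icc, max_le_iff, le_min_iff] at hs
  exact closedTerm_eq_zero_of_lt_or_lt (by omega)

lemma closedSum_eq_zero_of_out_of_range {k i : ℤ}
    (h : ¬(0 ≤ i ∧ i ≤ r ∧ 0 ≤ 2 * (m : ℤ) + k - i ∧ 2 * (m : ℤ) + k - i ≤ r)) :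
    closedSum r m k i = 0 := by
  refine sum_eq_zero fun s hs => ?_
  rw [mem_Icc] at hs
  by_cases hle : i ≤ r ∧ 2 * (m : ℤ) + k - i ≤ r
  · exact closedTerm_eq_zero_of_lt_or_lt (by omega)
  obtain hi | hj := not_and_or.mp hle
  · rw [closedTerm, binomZ_of_neg (a := (r : ℤ) - s) (by omega), mul_zero, zero_mul]
  · rw [closedTerm, binomZ_of_neg (a := (r : ℤ) - 2 * m + s) (by omega), mul_zero]

lemma closedSum_zero_left (hm : 2 * m ≤ r) {i : ℤ} (hi₀ : 0 ≤ i) (hi : i ≤ 2 * (m : ℤ)) :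
    closedSum r m 0 i = (-1) ^ i.toNat * binomZ (2 * (m : ℤ)) i := by
  rw [closedSum, sum_eq_single_of_mem i (mem_Icc.mpr ⟨hi₀, hi⟩)
    fun s _ hs => closedTerm_eq_zero_of_lt_or_lt (by omega), closedTerm,
    binomZ_self (by omega), show (r : ℤ) - (2 * m + 0 - i) = r - 2 * m + i by ring,
    binomZ_self (by omega), mul_one, mul_one]

lemma closedSum_add_one (k i : ℤ) :
    (((r : ℤ) - i + 1 : ℤ) : ℂ) * closedSum r m k (i - 1)
      + (((r : ℤ) - (2 * (m : ℤ) + (k + 1) - i) + 1 : ℤ) : ℂ) * closedSum r m k i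
      = ((k : ℂ) + 1) * closedSum r m (k + 1) i := by
  simp only [closedSum, mul_sum, ← sum_add_distrib]
  refine sum_congr rfl fun s _ => ?_
  have hfst := add_one_mul_binomZ_add_one ((r : ℤ) - s) ((r : ℤ) - i)
  have hsnd := add_one_mul_binomZ_add_one ((r : ℤ) - 2 * m + s) ((r : ℤ) - (2 * m + (k + 1) - i))
  simp only [closedTerm, show (r : ℤ) - (i - 1) = r - i + 1 by ring,
    show (r : ℤ) - (2 * m + k - (i - 1)) = r - (2 * m + (k + 1) - i) by ring,
    show (r : ℤ) - (2 * m + k - i) = r - (2 * m + (k + 1) - i) + 1 by ring]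
  push_cast at hfst hsnd ⊢
  linear_combination (-1) ^ s.toNat * binomZ (2 * (m : ℤ)) s *
    (binomZ ((r : ℤ) - 2 * m + s) ((r : ℤ) - (2 * m + (k + 1) - i)) * hfst
      + binomZ ((r : ℤ) - s) ((r : ℤ) - i) * hsnd)

end ClosedFormula

namespace IsCoeffFamily

variable {r m : ℕ} {q : ℤ → ℤ → ℤ → ℂ}

lemma apply_zero_sub (hq : IsCoeffFamily r m q) (hn : 0 ≤ famN r m) {i : ℤ} (hi₀ : 0 ≤ i)
    (hi : i ≤ 2 * (m : ℤ)) :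
    q 0 i (2 * m - i) = (-1) ^ i.toNat * binomZ (2 * (m : ℤ)) i * q 0 0 (2 * m) := by
  have hmr := two_mul_le_of_famN_nonneg hn
  induction i, hi₀ using Int.leInduction with
  | base => rw [binomZ_zero_right (by omega)]; simp
  | succ i hi₀ ih =>
    have hR1 := hq.2.1 0 i (2 * m - i - 1) le_rfl hn hi₀ (by omega) (by omega) (by omega)
    have hbinom := add_one_mul_binomZ_add_one (2 * (m : ℤ)) i
    rw [show 2 * (m : ℤ) - i - 1 + 1 = 2 * m - i by ring, ih (by omega)] at hR1
    rw [show 2 * (m : ℤ) - (i + 1) = 2 * m - i - 1 by ring,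
      show (i + 1).toNat = i.toNat + 1 by omega]
    refine mul_left_cancel₀ (show (i : ℂ) + 1 ≠ 0 by exact_mod_cast (by omega : i + 1 ≠ 0)) ?_
    push_cast at hR1 hbinom
    linear_combination -hR1 + (-1) ^ i.toNat * q 0 0 (2 * m) * hbinom

theorem binomZ_mul_eq_closedSum (hq : IsCoeffFamily r m q) {k : ℤ} (hk₀ : 0 ≤ k)
    (hk : k ≤ famN r m) (i : ℤ) :
    binomZ (famN r m) k * q k i (2 * m + k - i) = q 0 0 (2 * m) * closedSum r m k i := by
  have hn : 0 ≤ famN r m := hk₀.trans hk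
  have hmr := two_mul_le_of_famN_nonneg hn
  induction k, hk₀ using Int.leInduction generalizing i with
  | base =>
    rw [binomZ_zero_right hn, one_mul, add_zero]
    by_cases hi : 0 ≤ i ∧ i ≤ 2 * (m : ℤ)
    · rw [hq.apply_zero_sub hn hi.1 hi.2, closedSum_zero_left (by omega) hi.1 hi.2]; ring
    · rw [hq.1 _ _ _ (by omega), closedSum_eq_zero_of_out_of_range (by omega), mul_zero]
  | succ k hk₀ ih =>
    by_cases hij : 0 ≤ i ∧ i ≤ r ∧ 0 ≤ 2 * (m : ℤ) + (k + 1) - i ∧ 2 * (m : ℤ) + (k + 1) - i ≤ r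
    · obtain ⟨hi₀, hi, hj₀, hj⟩ := hij
      have hR2 := hq.2.2.1 k i _ hk₀ (by omega) hi₀ hi hj₀ hj
      have ih_left := ih (by omega) (i - 1)
      have ih_right := ih (by omega) i
      rw [show 2 * (m : ℤ) + k - (i - 1) = 2 * m + (k + 1) - i by ring] at ih_left
      rw [show 2 * (m : ℤ) + k - i = 2 * m + (k + 1) - i - 1 by ring] at ih_right
      have hbinom := add_one_mul_binomZ_add_one (famN r m) k
      have hsum := closedSum_add_one (r := r) (m := m) k i
      refine mul_left_cancel₀ (show (k : ℂ) + 1 ≠ 0 by exact_mod_cast (by omega : k + 1 ≠ 0)) ?_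
      push_cast at hR2 ih_left ih_right hbinom hsum ⊢
      linear_combination q (k + 1) i (2 * m + (k + 1) - i) * hbinom
        + binomZ (famN r m) k * hR2 + ((r : ℂ) - i + 1) * ih_left
        + ((r : ℂ) - (2 * m + (k + 1) - i) + 1) * ih_right + q 0 0 (2 * m) * hsum
    · rw [hq.1 _ _ _ (by omega), closedSum_eq_zero_of_out_of_range hij, mul_zero, mul_zero]

end IsCoeffFamily

theorem stmt3_general (r m : ℕ)
    (q : ℤ → ℤ → ℤ → ℂ) (hq : IsCoeffFamily r m q) :
    ∀ k i : ℤ, 0 ≤ k → 2 * k ≤ famN r m → 0 ≤ i → i ≤ (r : ℤ) →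
      0 ≤ 2 * (m : ℤ) + k - i → 2 * (m : ℤ) + k - i ≤ (r : ℤ) →
      binomZ (famN r m) k * q k i (2 * (m : ℤ) + k - i)
        = q 0 0 (2 * (m : ℤ)) *
            ∑ s ∈ Finset.Icc (max 0 (i - k)) (min (2 * (m : ℤ)) i),
              (-1) ^ s.toNat * binomZ (2 * (m : ℤ)) s *
                binomZ ((r : ℤ) - s) ((r : ℤ) - i) *
                binomZ ((r : ℤ) - 2 * (m : ℤ) + s) ((r : ℤ) - (2 * (m : ℤ) + k - i)) := by
  intro k i hk₀ hk _ _ _ _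
  rw [hq.binomZ_mul_eq_closedSum hk₀ (by omega) i, closedSum_eq_sum_Icc_max_min]
  rfl

/-- the closed formula for `q_k(i, 2m+k-i)` for `0 ≤ k ≤ n/2`. -/
theorem stmt3 (r m : ℕ) (hr : 2 ≤ r) (hm : 2 * m ≤ r)
    (q : ℤ → ℤ → ℤ → ℂ) (hq : IsCoeffFamily r m q) :
    ∀ k i : ℤ, 0 ≤ k → 2 * k ≤ famN r m → 0 ≤ i → i ≤ (r : ℤ) →
      0 ≤ 2 * (m : ℤ) + k - i → 2 * (m : ℤ) + k - i ≤ (r : ℤ) →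
      binomZ (famN r m) k * q k i (2 * (m : ℤ) + k - i)
        = q 0 0 (2 * (m : ℤ)) *
            ∑ s ∈ Finset.Icc (max 0 (i - k)) (min (2 * (m : ℤ)) i),
              (-1) ^ s.toNat * binomZ (2 * (m : ℤ)) s *
                binomZ ((r : ℤ) - s) ((r : ℤ) - i) *
                binomZ ((r : ℤ) - 2 * (m : ℤ) + s) ((r : ℤ) - (2 * (m : ℤ) + k - i)) :=
  stmt3_general r m q hq
end
end

section
/- Let q be a coefficient family that is symmetric, i.e. q_k(i,j) = q_k(j,i) for all k,i,j. Then for all integers k and i with 0 ≤ k ≤ r − 2m and 0 ≤ i ≤ r, setting j = 2m + k − i (assumed to satisfy 0 ≤ j ≤ r), one has q_k(i,j) = q_{n−k}(r−i, r−j). -/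
open Finset

noncomputable section

/-!
Descending induction on `k`, starting at the middle level `k = n/2 = r - 2m`, where
`j = r - i` and the claim is just the symmetry `q_k(i, r-i) = q_k(r-i, i)`. For the step,
(R1) at level `k` and (R2) at level `n - k`, applied at the mirrored indices, express
`k·q_{k-1}(i,j)` and `k·q_{n-k+1}(r-i,r-j)` as the same combination of values at levels
`k` and `n - k` that correspond under the mirror.
-/

def IsMirrorSymmetricAt (r m : ℕ) (q : ℤ → ℤ → ℤ → ℂ) (k : ℤ) : Prop :=
  ∀ i j : ℤ, i + j = 2 * m + k → q k i j = q (famN r m - k) (r - i) (r - j)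

section

variable {r m : ℕ} {q : ℤ → ℤ → ℤ → ℂ}

theorem isMirrorSymmetricAt_middle (hsym : ∀ k i j : ℤ, q k i j = q k j i) :
    IsMirrorSymmetricAt r m q (r - 2 * m) := by
  intro i j hij
  rw [show famN r m - (r - 2 * m) = r - 2 * m by unfold famN; ring,
    show (r : ℤ) - i = j by omega, show (r : ℤ) - j = i by omega]
  exact hsym _ i j

theorem IsCoeffFamily.isMirrorSymmetricAt_sub_one (hq : IsCoeffFamily r m q) {k : ℤ}
    (hk : 0 < k) (hkn : k ≤ famN r m) (h : IsMirrorSymmetricAt r m q k) :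
    IsMirrorSymmetricAt r m q (k - 1) := by
  intro i j hij
  by_cases hrange : 0 ≤ i ∧ i ≤ r ∧ 0 ≤ j ∧ j ≤ r
  swap
  · rw [hq.1 _ _ _ (by omega), hq.1 _ _ _ (by omega)]
  obtain ⟨hi0, hir, hj0, hjr⟩ := hrange
  have lower := hq.2.1 k i j hk.le hkn hi0 hir hj0 hjr
  have raise := hq.2.2.1 (famN r m - k) (r - i) (r - j) (by omega) (by omega)
    (by omega) (by omega) (by omega) (by omega)
  rw [h (i + 1) j (by omega), h i (j + 1) (by omega)] at lower
  rw [show famN r m - k + 1 = famN r m - (k - 1) by ring,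
    show (r : ℤ) - i - 1 = r - (i + 1) by ring, show (r : ℤ) - j - 1 = r - (j + 1) by ring,
    show famN r m - (famN r m - k) = k by ring] at raise
  refine mul_left_cancel₀ (Int.cast_ne_zero.mpr hk.ne' : (k : ℂ) ≠ 0) ?_
  push_cast at lower raise
  linear_combination lower - raise

theorem IsCoeffFamily.isMirrorSymmetricAt_of_le_middle (hq : IsCoeffFamily r m q)
    (hsym : ∀ k i j : ℤ, q k i j = q k j i) {k : ℤ} (hk0 : 0 ≤ k) (hk : k ≤ r - 2 * m) :
    IsMirrorSymmetricAt r m q k := by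
  induction k, hk using Int.leInductionDown with
  | base => exact isMirrorSymmetricAt_middle hsym
  | pred k hk ih =>
    exact hq.isMirrorSymmetricAt_sub_one (by omega) (by unfold famN; omega) (ih (by omega))

end

theorem stmt4_general (r m : ℕ)
    (q : ℤ → ℤ → ℤ → ℂ) (hq : IsCoeffFamily r m q)
    (hsym : ∀ k i j : ℤ, q k i j = q k j i) :
    ∀ k i : ℤ, 0 ≤ k → k ≤ (r : ℤ) - 2 * (m : ℤ) → 0 ≤ i → i ≤ (r : ℤ) →
      0 ≤ 2 * (m : ℤ) + k - i → 2 * (m : ℤ) + k - i ≤ (r : ℤ) →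
      q k i (2 * (m : ℤ) + k - i)
        = q (famN r m - k) ((r : ℤ) - i) ((r : ℤ) - (2 * (m : ℤ) + k - i)) :=
  fun k i hk0 hk _ _ _ _ => hq.isMirrorSymmetricAt_of_le_middle hsym hk0 hk i _ (by ring)

/-- the symmetry relation `q_k(i,j) = q_{n-k}(r-i, r-j)` for a symmetric
coefficient family, where `j = 2m + k - i` and `0 ≤ k ≤ r - 2m`. -/
theorem stmt4 (r m : ℕ) (hr : 2 ≤ r) (hm : 2 * m ≤ r)
    (q : ℤ → ℤ → ℤ → ℂ) (hq : IsCoeffFamily r m q)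
    (hsym : ∀ k i j : ℤ, q k i j = q k j i) :
    ∀ k i : ℤ, 0 ≤ k → k ≤ (r : ℤ) - 2 * (m : ℤ) → 0 ≤ i → i ≤ (r : ℤ) →
      0 ≤ 2 * (m : ℤ) + k - i → 2 * (m : ℤ) + k - i ≤ (r : ℤ) →
      q k i (2 * (m : ℤ) + k - i)
        = q (famN r m - k) ((r : ℤ) - i) ((r : ℤ) - (2 * (m : ℤ) + k - i)) :=
  stmt4_general r m q hq hsym
end
end

section
/- Let q be a symmetric coefficient family (q_k(i,j) = q_k(j,i) for all k,i,j), and for each 0 ≤ k ≤ n let A^k be the (r+1)×(r+1) complex matrix with entries (A^k)_{ij} = q_k(i,j), 0 ≤ i,j ≤ r. Then for every 0 ≤ k ≤ n/2 one has rank(A^k) = rank(A^{n−k}) and rank(A^k) ≤ 2m + k + 1. -/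
/-!
A coefficient family is determined by its seed `q 0 0 (2m)`: (R1) at level `0` propagates a
vanishing seed along the antidiagonal `i + j = 2m`, (R3) kills level `0` off that antidiagonal,
and (R2) raises the vanishing to every level. The reversed family
`(k, i, j) ↦ q (n - k) (r - i) (r - j)` satisfies the same relations (R1 and R2 swap), so the two
families are proportional, and `A^{n-k}` is a nonzero multiple of `A^k` with rows and columns
reversed. For the bound, (R3) forces `q k i j = 0` when `i > 2m + k`, so `A^k` has at most
`2m + k + 1` nonzero rows.
-/

open Finset

noncomputable section

def coeffMatrix (r : ℕ) (q : ℤ → ℤ → ℤ → ℂ) (k : ℤ) : Matrix (Fin (r + 1)) (Fin (r + 1)) ℂ :=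
  Matrix.of fun i j => q k ((i : ℕ) : ℤ) ((j : ℕ) : ℤ)

def coeffReverse (r m : ℕ) (q : ℤ → ℤ → ℤ → ℂ) : ℤ → ℤ → ℤ → ℂ :=
  fun k i j => q (famN r m - k) ((r : ℤ) - i) ((r : ℤ) - j)

namespace IsCoeffFamily

variable {r m : ℕ} {q q' : ℤ → ℤ → ℤ → ℂ}

theorem eq_zero_of_weight_ne (hq : IsCoeffFamily r m q) {k i j : ℤ}
    (h : famN r m - 2 * k - 2 * (r : ℤ) + 2 * i + 2 * j ≠ 0) : q k i j = 0 := by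
  by_cases hrange : 0 ≤ k ∧ k ≤ famN r m ∧ 0 ≤ i ∧ i ≤ (r : ℤ) ∧ 0 ≤ j ∧ j ≤ (r : ℤ)
  · obtain ⟨hk, hk', hi, hi', hj, hj'⟩ := hrange
    exact (mul_eq_zero.mp (hq.2.2.2 k i j hk hk' hi hi' hj hj')).resolve_left
      (Int.cast_ne_zero.mpr h)
  · exact hq.1 k i j hrange

theorem level_zero_antidiagonal_eq_zero (hm : 2 * m ≤ r) (hq : IsCoeffFamily r m q)
    (hseed : q 0 0 (2 * (m : ℤ)) = 0) (t : ℕ) : q 0 t (2 * (m : ℤ) - t) = 0 := by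
  induction t with
  | zero => simpa using hseed
  | succ t ih =>
    by_cases ht : (t : ℤ) + 1 ≤ 2 * (m : ℤ)
    · have hR1 := hq.2.1 0 t (2 * (m : ℤ) - t - 1) le_rfl (by unfold famN; omega) (by omega)
        (by omega) (by omega) (by omega)
      rw [sub_add_cancel, ih] at hR1
      simp only [Int.cast_zero, zero_mul, mul_zero, add_zero] at hR1
      have ht1 : ((t : ℤ) : ℂ) + 1 ≠ 0 := by exact_mod_cast Nat.succ_ne_zero t
      rw [Nat.cast_succ, ← sub_sub]
      exact (mul_eq_zero.mp hR1.symm).resolve_left ht1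
    · exact hq.1 _ _ _ (by omega)

theorem level_zero_eq_zero (hm : 2 * m ≤ r) (hq : IsCoeffFamily r m q)
    (hseed : q 0 0 (2 * (m : ℤ)) = 0) (i j : ℤ) : q 0 i j = 0 := by
  by_cases hij : i + j = 2 * (m : ℤ)
  · by_cases hi : 0 ≤ i
    · lift i to ℕ using hi
      rw [show j = 2 * (m : ℤ) - i by omega]
      exact hq.level_zero_antidiagonal_eq_zero hm hseed i
    · exact hq.1 _ _ _ (by omega)
  · exact hq.eq_zero_of_weight_ne (by unfold famN; omega)

theorem level_succ_eq_zero (hq : IsCoeffFamily r m q) {k : ℤ} (hk : 0 ≤ k)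
    (h : ∀ i j, q k i j = 0) (i j : ℤ) : q (k + 1) i j = 0 := by
  by_cases hrange : k + 1 ≤ famN r m ∧ 0 ≤ i ∧ i ≤ (r : ℤ) ∧ 0 ≤ j ∧ j ≤ (r : ℤ)
  · obtain ⟨hk', hi, hi', hj, hj'⟩ := hrange
    have hR2 := hq.2.2.1 k i j hk (by omega) hi hi' hj hj'
    rw [h, h, mul_zero, mul_zero, add_zero] at hR2
    exact (mul_eq_zero.mp hR2).resolve_left (Int.cast_ne_zero.mpr (by omega))
  · exact hq.1 _ _ _ (by omega)

theorem eq_zero_of_seed_eq_zero (hm : 2 * m ≤ r) (hq : IsCoeffFamily r m q)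
    (hseed : q 0 0 (2 * (m : ℤ)) = 0) (k i j : ℤ) : q k i j = 0 := by
  by_cases hk : 0 ≤ k
  · lift k to ℕ using hk
    induction k generalizing i j with
    | zero => exact hq.level_zero_eq_zero hm hseed i j
    | succ k ih => exact_mod_cast hq.level_succ_eq_zero k.cast_nonneg ih i j
  · exact hq.1 _ _ _ (by omega)

theorem smul_sub_smul (hq : IsCoeffFamily r m q) (hq' : IsCoeffFamily r m q') (a b : ℂ) :
    IsCoeffFamily r m (a • q - b • q') := by
  obtain ⟨hv, h1, h2, h3⟩ := hq
  obtain ⟨hv', h1', h2', h3'⟩ := hq'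
  refine ⟨fun k i j h => ?_, fun k i j hk hk' hi hi' hj hj' => ?_,
    fun k i j hk hk' hi hi' hj hj' => ?_, fun k i j hk hk' hi hi' hj hj' => ?_⟩ <;>
    simp only [Pi.sub_apply, Pi.smul_apply, smul_eq_mul]
  · rw [hv k i j h, hv' k i j h, mul_zero, mul_zero, sub_zero]
  · linear_combination a * h1 k i j hk hk' hi hi' hj hj' - b * h1' k i j hk hk' hi hi' hj hj'
  · linear_combination a * h2 k i j hk hk' hi hi' hj hj' - b * h2' k i j hk hk' hi hi' hj hj'
  · linear_combination a * h3 k i j hk hk' hi hi' hj hj' - b * h3' k i j hk hk' hi hi' hj hj'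

theorem reverse (hq : IsCoeffFamily r m q) : IsCoeffFamily r m (coeffReverse r m q) := by
  obtain ⟨hv, h1, h2, h3⟩ := hq
  refine ⟨fun k i j h => hv _ _ _ (by omega), fun k i j hk hk' hi hi' hj hj' => ?_,
    fun k i j hk hk' hi hi' hj hj' => ?_, fun k i j hk hk' hi hi' hj hj' => ?_⟩ <;>
    simp only [coeffReverse]
  · have hR2 := h2 (famN r m - k) (r - i) (r - j) (by omega) (by omega) (by omega) (by omega)
      (by omega) (by omega)
    rw [show famN r m - (k - 1) = famN r m - k + 1 by ring,
      show (r : ℤ) - (i + 1) = r - i - 1 by ring, show (r : ℤ) - (j + 1) = r - j - 1 by ring]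
    push_cast at hR2 ⊢
    linear_combination hR2
  · have hR1 := h1 (famN r m - k) (r - i) (r - j) (by omega) (by omega) (by omega) (by omega)
      (by omega) (by omega)
    rw [show famN r m - (k + 1) = famN r m - k - 1 by ring,
      show (r : ℤ) - (i - 1) = r - i + 1 by ring, show (r : ℤ) - (j - 1) = r - j + 1 by ring]
    push_cast at hR1 ⊢
    linear_combination hR1
  · have hR3 := h3 (famN r m - k) (r - i) (r - j) (by omega) (by omega) (by omega) (by omega)
      (by omega) (by omega)
    push_cast at hR3 ⊢
    linear_combination -hR3

theorem exists_reverse_eq_smul (hm : 2 * m ≤ r) (hq : IsCoeffFamily r m q) :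
    ∃ c : ℂ, c ≠ 0 ∧ coeffReverse r m q = c • q := by
  set lam := q 0 0 (2 * (m : ℤ))
  set mu := coeffReverse r m q 0 0 (2 * (m : ℤ))
  by_cases hlam : lam = 0
  · have hzero := hq.eq_zero_of_seed_eq_zero hm hlam
    refine ⟨1, one_ne_zero, ?_⟩
    ext k i j
    simp [coeffReverse, hzero]
  have hmu : mu ≠ 0 := by
    intro hmu
    have h := hq.reverse.eq_zero_of_seed_eq_zero hm hmu (famN r m) r (r - 2 * m)
    simp only [coeffReverse, sub_self, sub_sub_cancel] at h
    exact hlam h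
  have hprop := (hq.smul_sub_smul hq.reverse mu lam).eq_zero_of_seed_eq_zero hm
    (by simp only [Pi.sub_apply, Pi.smul_apply, smul_eq_mul]; ring)
  refine ⟨mu / lam, div_ne_zero hmu hlam, ?_⟩
  ext k i j
  have h := hprop k i j
  simp only [Pi.sub_apply, Pi.smul_apply, smul_eq_mul] at h ⊢
  field_simp
  linear_combination -h

theorem rank_coeffMatrix_reverse (hm : 2 * m ≤ r) (hq : IsCoeffFamily r m q) (k : ℤ) :
    (coeffMatrix r q (famN r m - k)).rank = (coeffMatrix r q k).rank := by
  obtain ⟨c, hc, hrev⟩ := hq.exists_reverse_eq_smul hm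
  have hmat : coeffMatrix r q (famN r m - k)
      = c • (coeffMatrix r q k).submatrix Fin.revPerm Fin.revPerm := by
    ext i j
    have h := congr_fun (congr_fun (congr_fun hrev k) (r - i)) (r - j)
    simp only [coeffReverse, sub_sub_cancel, Pi.smul_apply, smul_eq_mul] at h
    simp [coeffMatrix, h, Fin.val_rev, Nat.cast_sub (Nat.le_of_lt_succ i.isLt),
      Nat.cast_sub (Nat.le_of_lt_succ j.isLt)]
  rw [hmat, Matrix.rank_smul_of_mem_nonZeroDivisors _ (mem_nonZeroDivisors_of_ne_zero hc),
    Matrix.rank_submatrix]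

theorem rank_coeffMatrix_le (hq : IsCoeffFamily r m q) (k : ℕ) :
    (coeffMatrix r q k).rank ≤ 2 * m + k + 1 := by
  have hrows : Function.support (coeffMatrix r q k).row
      ⊆ ({i : Fin (r + 1) | (i : ℕ) < 2 * m + k + 1} : Finset _) := by
    intro i hi
    by_contra hlarge
    refine hi (funext fun j => hq.eq_zero_of_weight_ne ?_)
    simp only [coe_filter, mem_univ, true_and, Set.mem_ofPred_eq, not_lt] at hlarge
    unfold famN
    omega
  refine ((coeffMatrix r q k).rank_le_card_of_support_subset _ hrows).trans ?_
  rw [Fin.card_filter_val_lt]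
  exact min_le_right _ _

end IsCoeffFamily

theorem stmt5_general (r m : ℕ) (hm : 2 * m ≤ r)
    (q : ℤ → ℤ → ℤ → ℂ) (hq : IsCoeffFamily r m q) :
    ∀ k : ℤ, 0 ≤ k → 2 * k ≤ famN r m →
      (Matrix.of fun i j : Fin (r + 1) =>
          q k ((i : ℕ) : ℤ) ((j : ℕ) : ℤ)).rank
        = (Matrix.of fun i j : Fin (r + 1) =>
            q (famN r m - k) ((i : ℕ) : ℤ) ((j : ℕ) : ℤ)).rank ∧
      ((Matrix.of fun i j : Fin (r + 1) =>
          q k ((i : ℕ) : ℤ) ((j : ℕ) : ℤ)).rank : ℤ) ≤ 2 * (m : ℤ) + k + 1 := by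
  intro k hk _
  lift k to ℕ using hk
  exact ⟨(hq.rank_coeffMatrix_reverse hm k).symm, by exact_mod_cast hq.rank_coeffMatrix_le k⟩

/-- for a symmetric coefficient family, the matrices `A^k = (q_k(i,j))`
satisfy `rank A^k = rank A^{n-k}` and `rank A^k ≤ 2m + k + 1` for `0 ≤ k ≤ n/2`. -/
theorem stmt5 (r m : ℕ) (hr : 2 ≤ r) (hm : 2 * m ≤ r)
    (q : ℤ → ℤ → ℤ → ℂ) (hq : IsCoeffFamily r m q)
    (hsym : ∀ k i j : ℤ, q k i j = q k j i) :
    ∀ k : ℤ, 0 ≤ k → 2 * k ≤ famN r m →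
      (Matrix.of fun i j : Fin (r + 1) =>
          q k ((i : ℕ) : ℤ) ((j : ℕ) : ℤ)).rank
        = (Matrix.of fun i j : Fin (r + 1) =>
            q (famN r m - k) ((i : ℕ) : ℤ) ((j : ℕ) : ℤ)).rank ∧
      ((Matrix.of fun i j : Fin (r + 1) =>
          q k ((i : ℕ) : ℤ) ((j : ℕ) : ℤ)).rank : ℤ) ≤ 2 * (m : ℤ) + k + 1 :=
  stmt5_general r m hm q hq
end
end

section
/- Suppose m = 0 (so n = 2r), and let q be the canonical coefficient family with parameter λ ∈ ℂ, λ ≠ 0. Then for all integers k, i with 0 ≤ k ≤ r and 0 ≤ i ≤ k, one has binom(2r,k)·q_k(i, k−i) = λ·binom(r,i)·binom(r,k−i), and consequently q_k(i, k−i) = q_{2r−k}(r−i, r−k+i) ≠ 0. -/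
open Finset

noncomputable section

lemma binomZ_out (a b : ℤ) (h : b < 0 ∨ a < b) : binomZ a b = 0 := by
  rw [binomZ, if_neg]; omega

lemma binomZ_natCast_s7 (a b : ℕ) : binomZ (a : ℤ) (b : ℤ) = (a.choose b : ℂ) := by
  rcases le_or_gt b a with h | h
  · rw [binomZ, if_pos ⟨Int.natCast_nonneg b, by exact_mod_cast h⟩]
    simp
  · rw [binomZ_out _ _ (Or.inr (by exact_mod_cast h)), Nat.choose_eq_zero_of_lt h,
      Nat.cast_zero]

lemma binom_id (a b : ℕ) :
    ((b : ℂ) + 1) * binomZ (a : ℤ) ((b : ℤ) + 1)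
      = ((a : ℂ) - (b : ℂ)) * binomZ (a : ℤ) (b : ℤ) := by
  have h1 : ((b : ℤ) + 1) = ((b + 1 : ℕ) : ℤ) := by push_cast; ring
  rw [h1, binomZ_natCast_s7, binomZ_natCast_s7]
  rcases le_or_gt b a with h | h
  · have h2 : ((a.choose (b + 1) * (b + 1) : ℕ) : ℂ) = ((a.choose b * (a - b) : ℕ) : ℂ) := by
      rw [Nat.choose_succ_right_eq]
    push_cast [h] at h2
    linear_combination h2
  · rw [Nat.choose_eq_zero_of_lt h, Nat.choose_eq_zero_of_lt (by omega)]
    ring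

lemma binom_id' (a : ℕ) (i : ℤ) (hi : 0 ≤ i) :
    (i : ℂ) * binomZ (a : ℤ) i = ((a : ℂ) - (i : ℂ) + 1) * binomZ (a : ℤ) (i - 1) := by
  obtain ⟨b, rfl⟩ := Int.eq_ofNat_of_zero_le hi
  cases b with
  | zero =>
    have h0 : ((0 : ℕ) : ℤ) - 1 = -1 := by norm_num
    rw [h0, binomZ_out (a : ℤ) (-1) (Or.inl (by norm_num))]
    simp
  | succ c =>
    have e1 : ((c + 1 : ℕ) : ℤ) - 1 = (c : ℤ) := by omega
    have e2 : ((c + 1 : ℕ) : ℤ) = (c : ℤ) + 1 := by omega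
    rw [e1, e2]
    have h := binom_id a c
    push_cast
    linear_combination h

lemma key (r : ℕ) (lam : ℂ) (q : ℤ → ℤ → ℤ → ℂ) (hq : IsCanonical r 0 lam q) :
    ∀ k : ℕ, (k : ℤ) ≤ 2 * r → ∀ i j : ℤ, i + j = (k : ℤ) →
      binomZ (2 * (r : ℤ)) (k : ℤ) * q (k : ℤ) i j
        = lam * binomZ (r : ℤ) i * binomZ (r : ℤ) j := by
  obtain ⟨⟨hvan, hR1, hR2, hR3⟩, hq0⟩ := hq
  have hfam : famN r 0 = 2 * (r : ℤ) := by simp [famN]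
  have hzero : ∀ (kk i j : ℤ), (¬(0 ≤ i ∧ i ≤ (r : ℤ)) ∨ ¬(0 ≤ j ∧ j ≤ (r : ℤ))) →
      binomZ (2 * (r : ℤ)) kk * q kk i j = lam * binomZ (r : ℤ) i * binomZ (r : ℤ) j := by
    intro kk i j h
    have h1 : q kk i j = 0 := by
      apply hvan; rw [hfam]; omega
    rcases h with h | h
    · rw [h1, binomZ_out (r : ℤ) i (by omega)]; ring
    · rw [h1, binomZ_out (r : ℤ) j (by omega)]; ring
  intro k
  induction k with
  | zero =>
    intro _ i j hij
    by_cases hi : 0 ≤ i ∧ i ≤ (r : ℤ)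
    · by_cases hj : 0 ≤ j ∧ j ≤ (r : ℤ)
      · have hi0 : i = 0 := by omega
        have hj0 : j = 0 := by omega
        subst hi0 hj0
        have hv := hq0 0 0 le_rfl (by positivity) le_rfl (by positivity)
        simp only [Nat.cast_zero]
        rw [hv]
        norm_num [binomZ]
      · exact hzero _ i j (Or.inr hj)
    · exact hzero _ i j (Or.inl hi)
  | succ k ih =>
    intro hk2r i j hij
    by_cases hi : 0 ≤ i ∧ i ≤ (r : ℤ)
    · by_cases hj : 0 ≤ j ∧ j ≤ (r : ℤ)
      · have hk2r' : (k : ℤ) ≤ 2 * r := by push_cast at hk2r ⊢; omega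
        have E1 := hR2 k i j (by positivity) (by rw [hfam]; exact hk2r') hi.1 hi.2 hj.1 hj.2
        rw [hfam] at E1
        have H1 := ih hk2r' (i - 1) j (by omega)
        have H2 := ih hk2r' i (j - 1) (by omega)
        have A := binom_id (2 * r) k
        have B := binom_id' r i hi.1
        have C := binom_id' r j hj.1
        have hijC : (i : ℂ) + (j : ℂ) = (k : ℂ) + 1 := by exact_mod_cast hij
        push_cast at E1 A ⊢
        have hne : ((k : ℂ) + 1) ≠ 0 := Nat.cast_add_one_ne_zero k
        apply mul_left_cancel₀ hne
        linear_combination (q ((k : ℤ) + 1) i j) * A + binomZ (2 * (r : ℤ)) (k : ℤ) * E1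
          + ((r : ℂ) - (i : ℂ) + 1) * H1 + ((r : ℂ) - (j : ℂ) + 1) * H2
          - lam * binomZ (r : ℤ) j * B - lam * binomZ (r : ℤ) i * C
          + lam * binomZ (r : ℤ) i * binomZ (r : ℤ) j * hijC
      · exact hzero _ i j (Or.inr hj)
    · exact hzero _ i j (Or.inl hi)


/-- the case `m = 0` (so `n = 2r`):
`binom(2r,k)·q_k(i,k-i) = λ·binom(r,i)·binom(r,k-i)` and
`q_k(i,k-i) = q_{2r-k}(r-i,r-k+i) ≠ 0`. -/
theorem stmt7 (r : ℕ) (hr : 2 ≤ r)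
    (lam : ℂ) (hlam : lam ≠ 0)
    (q : ℤ → ℤ → ℤ → ℂ) (hq : IsCanonical r 0 lam q) :
    ∀ k i : ℤ, 0 ≤ k → k ≤ (r : ℤ) → 0 ≤ i → i ≤ k →
      binomZ (2 * (r : ℤ)) k * q k i (k - i)
          = lam * binomZ (r : ℤ) i * binomZ (r : ℤ) (k - i) ∧
      q k i (k - i) = q (2 * (r : ℤ) - k) ((r : ℤ) - i) ((r : ℤ) - k + i) ∧
      q k i (k - i) ≠ 0 := by
  intro k i hk0 hkr hi0 hik
  lift k to ℕ using hk0 with k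
  lift i to ℕ using hi0 with i
  have hik' : i ≤ k := by exact_mod_cast hik
  have hkr' : k ≤ r := by exact_mod_cast hkr
  have eq1 := key r lam q hq k (by omega) i ((k : ℤ) - i) (by ring)
  have eq2 := key r lam q hq (2 * r - k) (by omega) ((r : ℤ) - i) ((r : ℤ) - k + i) (by omega)
  have ha : ((2 * r - k : ℕ) : ℤ) = 2 * (r : ℤ) - k := by omega
  rw [ha] at eq2
  have harg : 2 * (r : ℤ) = ((2 * r : ℕ) : ℤ) := by push_cast; ring
  have hb1 : binomZ (2 * (r : ℤ)) (2 * (r : ℤ) - k) = binomZ (2 * (r : ℤ)) (k : ℤ) := by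
    have h1 : 2 * (r : ℤ) - k = ((2 * r - k : ℕ) : ℤ) := by omega
    rw [h1, harg, binomZ_natCast_s7, binomZ_natCast_s7, Nat.choose_symm (by omega)]
  have hb2 : binomZ (r : ℤ) ((r : ℤ) - i) = binomZ (r : ℤ) (i : ℤ) := by
    have h1 : (r : ℤ) - i = ((r - i : ℕ) : ℤ) := by omega
    rw [h1, binomZ_natCast_s7, binomZ_natCast_s7, Nat.choose_symm (by omega)]
  have hb3 : binomZ (r : ℤ) ((r : ℤ) - k + i) = binomZ (r : ℤ) ((k : ℤ) - i) := by
    have h1 : (r : ℤ) - k + i = ((r - (k - i) : ℕ) : ℤ) := by omega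
    have h2 : (k : ℤ) - i = ((k - i : ℕ) : ℤ) := by omega
    rw [h1, h2, binomZ_natCast_s7, binomZ_natCast_s7, Nat.choose_symm (by omega)]
  rw [hb1, hb2, hb3] at eq2
  have hB : binomZ (2 * (r : ℤ)) (k : ℤ) ≠ 0 := by
    rw [harg, binomZ_natCast_s7]
    exact_mod_cast (Nat.choose_pos (by omega)).ne'
  have hP : binomZ (r : ℤ) (i : ℤ) ≠ 0 := by
    rw [binomZ_natCast_s7]
    exact_mod_cast (Nat.choose_pos (by omega)).ne'
  have hQ : binomZ (r : ℤ) ((k : ℤ) - i) ≠ 0 := by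
    have h2 : (k : ℤ) - i = ((k - i : ℕ) : ℤ) := by omega
    rw [h2, binomZ_natCast_s7]
    exact_mod_cast (Nat.choose_pos (by omega)).ne'
  refine ⟨eq1, mul_left_cancel₀ hB (eq1.trans eq2.symm), ?_⟩
  intro h0
  rw [h0, mul_zero] at eq1
  exact (mul_ne_zero (mul_ne_zero hlam hP) hQ) eq1.symm
end
end

section
/- Let q be the canonical coefficient family with parameter λ ≠ 0, and let a = (a_0,…,a_r) ∈ ℂ^{r+1} with a_r ≠ 0. Let J be the (n+1)×(r+1) complex matrix with entries J_{k,i} = 2·q_k(i, 2m+k−i)·a_{2m+k−i} for 0 ≤ k ≤ n, 0 ≤ i ≤ r (where the entry is 0 if 2m+k−i lies outside {0,…,r}). Then rank(J) ≥ r − 2m + 1. (This is the Jacobian of (Q_0,…,Q_n) at a, and it shows every irreducible component of M_m has dimension strictly less than 2m.) -/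
/-!
The rows `k = r - 2m + t` (`0 ≤ t ≤ r - 2m`) and columns `i = t'` (`0 ≤ t' ≤ r - 2m`) of the
Jacobian form an upper triangular square block: its `(t, t')` entry involves `a_{r + t - t'}`,
which vanishes for `t' < t` because `a` is supported on `0, …, r`. Its diagonal entries are
`2 q_{r-2m+t}(t, r) a_r`. These coefficients are nonzero: (R2) at `i = 0` propagates
`q_0(0, 2m) = λ ≠ 0` along the edge `q_k(0, 2m + k)` up to `q_{r-2m}(0, r)`, and then (R1) at
`j = r` propagates it along `q_{r-2m+t}(t, r)`.
-/

open Finset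

noncomputable section

namespace Matrix

theorem card_le_rank_of_isUpperTriangular_submatrix {m n p R : Type*} [Fintype n] [Fintype p]
    [LinearOrder p] [CommRing R] [IsDomain R] (A : Matrix m n R) (f : p → m) (g : p → n)
    (htri : (A.submatrix f g).IsUpperTriangular) (hdiag : ∀ t, A (f t) (g t) ≠ 0) :
    Fintype.card p ≤ A.rank := by
  classical
  have hdet : (A.submatrix f g).det ≠ 0 := by
    rw [det_of_isUpperTriangular htri]
    exact prod_ne_zero_iff.mpr fun t _ => hdiag t
  rw [← rank_of_det_ne_zero hdet]
  exact rank_submatrix_le A f g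

end Matrix

namespace IsCoeffFamily

variable {r m : ℕ} {q : ℤ → ℤ → ℤ → ℂ}

theorem left_edge_succ_ne_zero (hq : IsCoeffFamily r m q) {k j : ℤ} (hk₀ : 0 ≤ k)
    (hk : k < famN r m) (hj₀ : 0 ≤ j) (hj : j ≤ r) (h : q k 0 (j - 1) ≠ 0) :
    q (k + 1) 0 j ≠ 0 := by
  obtain ⟨hzero, -, hR2, -⟩ := hq
  have hR2 := hR2 k 0 j hk₀ hk.le le_rfl (by positivity) hj₀ hj
  rw [hzero k (0 - 1) j (by omega), mul_zero, zero_add] at hR2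
  intro hcon
  rw [hcon, mul_zero, eq_comm, mul_eq_zero, Int.cast_eq_zero] at hR2
  exact hR2.elim (by omega) h

theorem top_edge_succ_ne_zero (hq : IsCoeffFamily r m q) {k i : ℤ} (hk₀ : 0 < k)
    (hk : k ≤ famN r m) (hi₀ : 0 ≤ i) (hi : i ≤ r) (h : q (k - 1) i r ≠ 0) :
    q k (i + 1) r ≠ 0 := by
  obtain ⟨hzero, hR1, -, -⟩ := hq
  have hR1 := hR1 k i r hk₀.le hk hi₀ hi (by positivity) le_rfl
  rw [hzero k i (r + 1) (by omega), mul_zero, add_zero] at hR1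
  intro hcon
  rw [hcon, mul_zero, mul_eq_zero, Int.cast_eq_zero] at hR1
  exact hR1.elim (by omega) h

end IsCoeffFamily

namespace IsCanonical

variable {r m : ℕ} {lam : ℂ} {q : ℤ → ℤ → ℤ → ℂ}

theorem origin_ne_zero (hq : IsCanonical r m lam q) (hm : 2 * m ≤ r) (hlam : lam ≠ 0) :
    q 0 0 (2 * m) ≠ 0 := by
  rw [hq.2 0 (2 * m) le_rfl (by positivity) (by positivity) (by omega)]
  simp [binomZ, hlam]

theorem left_edge_ne_zero (hq : IsCanonical r m lam q) (hlam : lam ≠ 0) (k : ℕ)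
    (hk : 2 * m + k ≤ r) : q k 0 (2 * m + k) ≠ 0 := by
  induction k with
  | zero => simpa using hq.origin_ne_zero (by omega) hlam
  | succ k ih =>
    push_cast
    refine hq.1.left_edge_succ_ne_zero (by positivity) (by unfold famN; omega) (by positivity)
      (by omega) ?_
    convert ih (by omega) using 2
    ring

theorem top_edge_ne_zero (hq : IsCanonical r m lam q) (hlam : lam ≠ 0) (t : ℕ)
    (ht : 2 * m + t ≤ r) : q (r - 2 * m + t) t r ≠ 0 := by
  induction t with
  | zero =>
    convert hq.left_edge_ne_zero hlam (r - 2 * m) (by omega) using 2 <;>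
      push_cast [Nat.cast_sub (show 2 * m ≤ r by omega)] <;> ring
  | succ t ih =>
    push_cast
    refine hq.1.top_edge_succ_ne_zero (by omega) (by unfold famN; omega) (by positivity)
      (by omega) ?_
    simpa [← add_assoc] using ih (by omega)

end IsCanonical

theorem stmt8_general (r m : ℕ) (hm : 2 * m ≤ r)
    (lam : ℂ) (hlam : lam ≠ 0)
    (q : ℤ → ℤ → ℤ → ℂ) (hq : IsCanonical r m lam q)
    (a : ℤ → ℂ)
    (harange : ∀ i : ℤ, ¬(0 ≤ i ∧ i ≤ (r : ℤ)) → a i = 0)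
    (har : a (r : ℤ) ≠ 0) :
    r - 2 * m + 1 ≤
      (Matrix.of fun (k : Fin (2 * r - 4 * m + 1)) (i : Fin (r + 1)) =>
        2 * q ((k : ℕ) : ℤ) ((i : ℕ) : ℤ) (2 * (m : ℤ) + ((k : ℕ) : ℤ) - ((i : ℕ) : ℤ))
          * a (2 * (m : ℤ) + ((k : ℕ) : ℤ) - ((i : ℕ) : ℤ))).rank := by
  let row : Fin (r - 2 * m + 1) → Fin (2 * r - 4 * m + 1) := fun t => ⟨r - 2 * m + t, by omega⟩
  let col : Fin (r - 2 * m + 1) → Fin (r + 1) := Fin.castLE (by omega)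
  have hrow (t : Fin (r - 2 * m + 1)) : (((row t : ℕ) : ℤ)) = r - 2 * m + (t : ℕ) := by
    simp [row, Nat.cast_sub hm]
  simpa only [Fintype.card_fin] using Matrix.card_le_rank_of_isUpperTriangular_submatrix _ row col
    (fun t t' (hlt : t' < t) => by
      have : a (2 * m + (row t : ℕ) - (t' : ℕ)) = 0 := harange _ (by rw [hrow]; omega)
      simp only [Matrix.submatrix_apply, Matrix.of_apply, col, Fin.val_castLE, this, mul_zero])
    (fun t => by
      have hidx : 2 * (m : ℤ) + (row t : ℕ) - (t : ℕ) = r := by rw [hrow]; ring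
      simp only [Matrix.of_apply, col, Fin.val_castLE]
      rw [hidx, hrow]
      exact mul_ne_zero (mul_ne_zero two_ne_zero (hq.top_edge_ne_zero hlam t (by omega))) har)

/-- the Jacobian matrix of `(Q_0, …, Q_n)` at a point `a` with `a_r ≠ 0`
has rank at least `r - 2m + 1`. -/
theorem stmt8 (r m : ℕ) (hr : 2 ≤ r) (hm : 2 * m ≤ r)
    (lam : ℂ) (hlam : lam ≠ 0)
    (q : ℤ → ℤ → ℤ → ℂ) (hq : IsCanonical r m lam q)
    (a : ℤ → ℂ)
    (harange : ∀ i : ℤ, ¬(0 ≤ i ∧ i ≤ (r : ℤ)) → a i = 0)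
    (har : a (r : ℤ) ≠ 0) :
    r - 2 * m + 1 ≤
      (Matrix.of fun (k : Fin (2 * r - 4 * m + 1)) (i : Fin (r + 1)) =>
        2 * q ((k : ℕ) : ℤ) ((i : ℕ) : ℤ) (2 * (m : ℤ) + ((k : ℕ) : ℤ) - ((i : ℕ) : ℤ))
          * a (2 * (m : ℤ) + ((k : ℕ) : ℤ) - ((i : ℕ) : ℤ))).rank :=
  stmt8_general r m hm lam hlam q hq a harange har
end
end

section
/- Suppose m = 0 (so n = 2r), and let q be the canonical coefficient family with parameter λ ≠ 0. If a = (a_0,…,a_r) ∈ ℂ^{r+1} satisfies Q_k(a) = Σ_{0≤i,j≤r} q_k(i,j)·a_i·a_j = 0 for every 0 ≤ k ≤ 2r, then a = 0. (That is, the variety M_0 ⊆ ℙ^r is empty.) -/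
open Finset

noncomputable section

/-- for `m = 0` the variety `M_0` is empty: if all the quadrics `Q_k`
vanish at `a` then `a = 0`. -/
theorem stmt9 (r : ℕ) (hr : 2 ≤ r)
    (lam : ℂ) (hlam : lam ≠ 0)
    (q : ℤ → ℤ → ℤ → ℂ) (hq : IsCanonical r 0 lam q)
    (a : ℤ → ℂ)
    (hQ : ∀ k : ℤ, 0 ≤ k → k ≤ 2 * (r : ℤ) →
      ∑ i ∈ Finset.Icc (0 : ℤ) (r : ℤ), ∑ j ∈ Finset.Icc (0 : ℤ) (r : ℤ),
        q k i j * a i * a j = 0) :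
    ∀ i : ℤ, 0 ≤ i → i ≤ (r : ℤ) → a i = 0 := by

  obtain ⟨⟨hvan, _hR1, hR2, hR3⟩, h0⟩ := hq
  have hN : famN r 0 = 2 * (r : ℤ) := by simp [famN]
  -- support: q k i j = 0 unless i + j = k
  have hsupp : ∀ k i j : ℤ, 0 ≤ k → k ≤ 2 * (r : ℤ) → 0 ≤ i → i ≤ (r : ℤ) →
      0 ≤ j → j ≤ (r : ℤ) → i + j ≠ k → q k i j = 0 := by
    intro k i j hk hk2 hi hi2 hj hj2 hne
    have h3 := hR3 k i j hk (by rw [hN]; exact hk2) hi hi2 hj hj2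
    rw [hN] at h3
    have hc : ((2 * (r : ℤ) - 2 * k - 2 * (r : ℤ) + 2 * i + 2 * j : ℤ) : ℂ) ≠ 0 := by
      rw [Int.cast_ne_zero]; omega
    exact (mul_eq_zero.mp h3).resolve_left hc
  -- the explicit formula
  have key : ∀ k : ℕ, (k : ℤ) ≤ 2 * (r : ℤ) → ∀ i j : ℤ, 0 ≤ i → i ≤ (r : ℤ) →
      0 ≤ j → j ≤ (r : ℤ) → i + j = (k : ℤ) →
      ((2 * r).choose k : ℂ) * q (k : ℤ) i j
        = lam * (r.choose i.toNat) * (r.choose j.toNat) := by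
    intro k
    induction k with
    | zero =>
      intro _ i j hi hi2 hj hj2 hij
      have hi0 : i = 0 := by omega
      have hj0 : j = 0 := by omega
      subst hi0; subst hj0
      have hq0 := h0 0 0 le_rfl (by positivity) le_rfl (by positivity)
      simp [binomZ] at hq0
      simp [hq0]
    | succ k ih =>
      intro hk2 i j hi hi2 hj hj2 hij
      have hkle : (k : ℤ) ≤ 2 * (r : ℤ) := by omega
      have E := hR2 k i j (by positivity) (by rw [hN]; exact hkle) hi hi2 hj hj2
      rw [hN] at E
      push_cast at E
      -- term 1
      have h1 : ((r : ℂ) - i + 1) * (((2 * r).choose k : ℂ) * q (k : ℤ) (i - 1) j)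
          = (i : ℂ) * (lam * (r.choose i.toNat) * (r.choose j.toNat)) := by
        by_cases hi1 : i = 0
        · subst hi1
          have : q (k : ℤ) (-1) j = 0 := hvan _ _ _ (by omega)
          simp [this]
        · have hi1' : 1 ≤ i := by omega
          obtain ⟨s, rfl⟩ : ∃ s : ℕ, i = (s : ℤ) + 1 :=
            ⟨(i - 1).toNat, by omega⟩
          have hIH := ih hkle ((s : ℤ)) j (by positivity) (by omega) hj hj2 (by omega)
          have hts : ((s : ℤ) + 1 - 1) = (s : ℤ) := by ring
          rw [hts, hIH]
          have hsr : s + 1 ≤ r := by omega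
          have hch : (r.choose (s + 1) : ℂ) * (s + 1) = (r.choose s : ℂ) * ((r : ℂ) - s) := by
            have := Nat.choose_succ_right_eq r s
            have hsub : ((r - s : ℕ) : ℂ) = (r : ℂ) - s := by
              push_cast [Nat.cast_sub (by omega : s ≤ r)]; ring
            calc (r.choose (s + 1) : ℂ) * (s + 1) = ((r.choose (s + 1) * (s + 1) : ℕ) : ℂ) := by push_cast; ring
              _ = ((r.choose s * (r - s) : ℕ) : ℂ) := by rw [this]
              _ = (r.choose s : ℂ) * ((r : ℂ) - s) := by push_cast [hsub]; ring
          have htn : ((s : ℤ) + 1).toNat = s + 1 := by omega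
          have htn2 : ((s : ℤ)).toNat = s := by omega
          rw [htn, htn2]
          push_cast
          linear_combination (-lam) * (r.choose j.toNat : ℂ) * hch
      -- term 2
      have h2 : ((r : ℂ) - j + 1) * (((2 * r).choose k : ℂ) * q (k : ℤ) i (j - 1))
          = (j : ℂ) * (lam * (r.choose i.toNat) * (r.choose j.toNat)) := by
        by_cases hj1 : j = 0
        · subst hj1
          have : q (k : ℤ) i (-1) = 0 := hvan _ _ _ (by omega)
          simp [this]
        · have hj1' : 1 ≤ j := by omega
          obtain ⟨s, rfl⟩ : ∃ s : ℕ, j = (s : ℤ) + 1 :=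
            ⟨(j - 1).toNat, by omega⟩
          have hIH := ih hkle i ((s : ℤ)) hi hi2 (by positivity) (by omega) (by omega)
          have hts : ((s : ℤ) + 1 - 1) = (s : ℤ) := by ring
          rw [hts, hIH]
          have hsr : s + 1 ≤ r := by omega
          have hch : (r.choose (s + 1) : ℂ) * (s + 1) = (r.choose s : ℂ) * ((r : ℂ) - s) := by
            have := Nat.choose_succ_right_eq r s
            have hsub : ((r - s : ℕ) : ℂ) = (r : ℂ) - s := by
              push_cast [Nat.cast_sub (by omega : s ≤ r)]; ring
            calc (r.choose (s + 1) : ℂ) * (s + 1) = ((r.choose (s + 1) * (s + 1) : ℕ) : ℂ) := by push_cast; ring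
              _ = ((r.choose s * (r - s) : ℕ) : ℂ) := by rw [this]
              _ = (r.choose s : ℂ) * ((r : ℂ) - s) := by push_cast [hsub]; ring
          have htn : ((s : ℤ) + 1).toNat = s + 1 := by omega
          have htn2 : ((s : ℤ)).toNat = s := by omega
          rw [htn, htn2]
          push_cast
          linear_combination (-lam) * (r.choose i.toNat : ℂ) * hch
      -- choose recurrence
      have hknat : k ≤ 2 * r := by omega
      have hcc : (2 * (r : ℂ) - k) * ((2 * r).choose k : ℂ)
          = ((k : ℂ) + 1) * ((2 * r).choose (k + 1) : ℂ) := by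
        have := Nat.choose_succ_right_eq (2 * r) k
        have hsub : ((2 * r - k : ℕ) : ℂ) = 2 * (r : ℂ) - k := by
          push_cast [Nat.cast_sub hknat]; ring
        calc (2 * (r : ℂ) - k) * ((2 * r).choose k : ℂ)
            = (((2 * r).choose k * (2 * r - k) : ℕ) : ℂ) := by push_cast [hsub]; ring
          _ = (((2 * r).choose (k + 1) * (k + 1) : ℕ) : ℂ) := by rw [this]
          _ = ((k : ℂ) + 1) * ((2 * r).choose (k + 1) : ℂ) := by push_cast; ring
      have hij' : (i : ℂ) + (j : ℂ) = (k : ℂ) + 1 := by exact_mod_cast hij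
      have hk1 : ((k : ℂ) + 1) ≠ 0 := Nat.cast_add_one_ne_zero k
      have main : ((k : ℂ) + 1) * (((2 * r).choose (k + 1) : ℂ) * q ((k : ℤ) + 1) i j)
          = ((k : ℂ) + 1) * (lam * (r.choose i.toNat) * (r.choose j.toNat)) := by
        linear_combination ((2 * r).choose k : ℂ) * E + h1 + h2
          - q ((k : ℤ) + 1) i j * hcc
          + lam * (r.choose i.toNat : ℂ) * (r.choose j.toNat : ℂ) * hij'
      have main' := mul_left_cancel₀ hk1 main
      have : ((k + 1 : ℕ) : ℤ) = (k : ℤ) + 1 := by push_cast; ring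
      rw [this]
      exact main'
  -- conclusion: strong induction on the index
  have H : ∀ t : ℕ, (t : ℤ) ≤ (r : ℤ) → a (t : ℤ) = 0 := by
    intro t
    induction t using Nat.strong_induction_on with
    | _ t ih =>
      intro htr
      have hQ2t := hQ (2 * (t : ℤ)) (by positivity) (by omega)
      have hterm : ∀ i ∈ Finset.Icc (0 : ℤ) (r : ℤ), ∀ j ∈ Finset.Icc (0 : ℤ) (r : ℤ),
          ¬(i = (t : ℤ) ∧ j = (t : ℤ)) → q (2 * (t : ℤ)) i j * a i * a j = 0 := by
        intro i hi j hj hne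
        rw [Finset.mem_Icc] at hi hj
        by_cases h1 : i < (t : ℤ)
        · have hai : a i = 0 := by
            have := ih i.toNat (by omega) (by omega)
            rwa [Int.toNat_of_nonneg hi.1] at this
          rw [hai]; ring
        · by_cases h2 : j < (t : ℤ)
          · have haj : a j = 0 := by
              have := ih j.toNat (by omega) (by omega)
              rwa [Int.toNat_of_nonneg hj.1] at this
            rw [haj]; ring
          · have hne2 : i + j ≠ 2 * (t : ℤ) := by omega
            rw [hsupp (2 * (t : ℤ)) i j (by positivity) (by omega) hi.1 hi.2 hj.1 hj.2 hne2]
            ring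
      have htmem : (t : ℤ) ∈ Finset.Icc (0 : ℤ) (r : ℤ) := by
        rw [Finset.mem_Icc]; omega
      have hsum : ∑ i ∈ Finset.Icc (0 : ℤ) (r : ℤ), ∑ j ∈ Finset.Icc (0 : ℤ) (r : ℤ),
          q (2 * (t : ℤ)) i j * a i * a j
          = q (2 * (t : ℤ)) (t : ℤ) (t : ℤ) * a (t : ℤ) * a (t : ℤ) := by
        rw [Finset.sum_eq_single_of_mem ((t : ℤ)) htmem]
        · rw [Finset.sum_eq_single_of_mem ((t : ℤ)) htmem]
          intro j hj hjne
          exact hterm _ htmem _ hj (by tauto)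
        · intro i hi hine
          exact Finset.sum_eq_zero fun j hj => hterm _ hi _ hj (by tauto)
      have hk := key (2 * t) (by push_cast; omega) (t : ℤ) (t : ℤ)
        (by positivity) htr (by positivity) htr (by push_cast; ring)
      have htn : ((t : ℤ)).toNat = t := by omega
      rw [htn] at hk
      have hcast : ((2 * t : ℕ) : ℤ) = 2 * (t : ℤ) := by push_cast; ring
      rw [hcast] at hk
      have hchr : (r.choose t : ℂ) ≠ 0 :=
        Nat.cast_ne_zero.mpr (Nat.choose_pos (by omega)).ne'
      have hqne : q (2 * (t : ℤ)) (t : ℤ) (t : ℤ) ≠ 0 := by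
        intro h
        rw [h, mul_zero] at hk
        exact (mul_ne_zero (mul_ne_zero hlam hchr) hchr) hk.symm
      rw [hsum] at hQ2t
      rcases mul_eq_zero.mp hQ2t with h | h
      · rcases mul_eq_zero.mp h with h' | h'
        · exact absurd h' hqne
        · exact h'
      · exact h
  intro i hi hir
  have := H i.toNat (by omega)
  rwa [Int.toNat_of_nonneg hi] at this
end
end

section
/- Suppose m ≥ 1, and let q be any coefficient family. Then for every 0 ≤ k ≤ n one has Σ_{i=0}^{r} q_k(i, 2m+k−i) = 0 (terms with 2m+k−i outside {0,…,r} being 0); consequently, for every t ∈ ℂ the point a with coordinates a_i = t^i satisfies Q_k(a) = Σ_{0≤i,j≤r} q_k(i,j)·t^i·t^j = 0 for all k. (That is, the Veronese curve c_r is contained in M_m.) -/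
open Finset

noncomputable section

/-- Support lemma: `q k i j = 0` unless `i + j = 2m + k`. -/
lemma stmt10_support {r m : ℕ} {q : ℤ → ℤ → ℤ → ℂ} (hq : IsCoeffFamily r m q)
    (k i j : ℤ) (hne : i + j ≠ 2 * (m : ℤ) + k) : q k i j = 0 := by
  by_cases hrange : 0 ≤ k ∧ k ≤ famN r m ∧ 0 ≤ i ∧ i ≤ (r : ℤ) ∧ 0 ≤ j ∧ j ≤ (r : ℤ)
  · obtain ⟨hk0, hkn, hi0, hir, hj0, hjr⟩ := hrange
    have h3 := hq.2.2.2 k i j hk0 hkn hi0 hir hj0 hjr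
    have hco : ((famN r m - 2 * k - 2 * (r : ℤ) + 2 * i + 2 * j : ℤ) : ℂ) ≠ 0 := by
      rw [Int.cast_ne_zero]
      simp only [famN] at *
      omega
    exact (mul_eq_zero.mp h3).resolve_left hco
  · exact hq.1 k i j hrange

/-- Shift lemma. -/
lemma stmt10_shift (R : ℤ) (g : ℤ → ℂ) (htop : g (R + 1) = 0) :
    ∑ i ∈ Finset.Icc (0 : ℤ) R, ((i : ℂ) + 1) * g (i + 1)
      = ∑ i ∈ Finset.Icc (0 : ℤ) R, (i : ℂ) * g i := by
  have h1 : ∑ i ∈ Finset.Icc (0 : ℤ) R, ((i : ℂ) + 1) * g (i + 1)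
      = ∑ i ∈ Finset.Icc (1 : ℤ) (R + 1), (i : ℂ) * g i := by
    refine Finset.sum_nbij' (fun i => i + 1) (fun i => i - 1) ?_ ?_ ?_ ?_ ?_ <;>
      intro a ha <;> simp only [Finset.mem_Icc] at * <;> [omega; omega; ring; ring; skip]
    push_cast; ring
  rw [h1]
  have h2 : ∑ i ∈ Finset.Icc (1 : ℤ) (R + 1), (i : ℂ) * g i
      = ∑ i ∈ Finset.Icc (0 : ℤ) (R + 1), (i : ℂ) * g i := by
    refine Finset.sum_subset (Finset.Icc_subset_Icc_left (by omega)) ?_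
    intro x hx hx'
    simp only [Finset.mem_Icc] at hx hx'
    have : x = 0 := by omega
    simp [this]
  rw [h2]
  refine (Finset.sum_subset (Finset.Icc_subset_Icc_right (by omega)) ?_).symm
  intro x hx hx'
  simp only [Finset.mem_Icc] at hx hx'
  have : x = R + 1 := by omega
  simp [this, htop]

/-- Grid-sum recurrence: `k T_{k-1} = (2m+k) T_k`. -/
lemma stmt10_Trel {r m : ℕ} {q : ℤ → ℤ → ℤ → ℂ} (hq : IsCoeffFamily r m q)
    (hmain : ∀ k i j : ℤ, (i + j ≠ 2 * (m : ℤ) + k) → q k i j = 0)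
    (k : ℤ) (hk0 : 0 ≤ k) (hkn : k ≤ famN r m) :
    (k : ℂ) * (∑ i ∈ Finset.Icc (0 : ℤ) (r : ℤ), ∑ j ∈ Finset.Icc (0 : ℤ) (r : ℤ), q (k - 1) i j)
      = ((2 * (m : ℤ) + k : ℤ) : ℂ) *
        ∑ i ∈ Finset.Icc (0 : ℤ) (r : ℤ), ∑ j ∈ Finset.Icc (0 : ℤ) (r : ℤ), q k i j := by
  have hout : ∀ i j : ℤ, (r : ℤ) < i ∨ (r : ℤ) < j → q k i j = 0 := by
    intro i j h
    apply hq.1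
    rintro ⟨_, _, _, _, _, _⟩
    omega
  calc (k : ℂ) * ∑ i ∈ Finset.Icc (0 : ℤ) (r : ℤ), ∑ j ∈ Finset.Icc (0 : ℤ) (r : ℤ), q (k - 1) i j
      = ∑ i ∈ Finset.Icc (0 : ℤ) (r : ℤ), ∑ j ∈ Finset.Icc (0 : ℤ) (r : ℤ),
          (((i : ℂ) + 1) * q k (i + 1) j + ((j : ℂ) + 1) * q k i (j + 1)) := by
        rw [Finset.mul_sum]
        refine Finset.sum_congr rfl fun i hi => ?_
        rw [Finset.mul_sum]
        refine Finset.sum_congr rfl fun j hj => ?_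
        simp only [Finset.mem_Icc] at hi hj
        exact hq.2.1 k i j hk0 hkn hi.1 hi.2 hj.1 hj.2
    _ = ∑ i ∈ Finset.Icc (0 : ℤ) (r : ℤ), ∑ j ∈ Finset.Icc (0 : ℤ) (r : ℤ),
          ((i : ℂ) * q k i j + (j : ℂ) * q k i j) := by
        have hA : ∑ i ∈ Finset.Icc (0 : ℤ) (r : ℤ), ∑ j ∈ Finset.Icc (0 : ℤ) (r : ℤ),
            ((i : ℂ) + 1) * q k (i + 1) j
            = ∑ i ∈ Finset.Icc (0 : ℤ) (r : ℤ), ∑ j ∈ Finset.Icc (0 : ℤ) (r : ℤ),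
              (i : ℂ) * q k i j := by
          calc ∑ i ∈ Finset.Icc (0 : ℤ) (r : ℤ), ∑ j ∈ Finset.Icc (0 : ℤ) (r : ℤ),
              ((i : ℂ) + 1) * q k (i + 1) j
              = ∑ j ∈ Finset.Icc (0 : ℤ) (r : ℤ), ∑ i ∈ Finset.Icc (0 : ℤ) (r : ℤ),
                ((i : ℂ) + 1) * q k (i + 1) j := Finset.sum_comm
            _ = ∑ j ∈ Finset.Icc (0 : ℤ) (r : ℤ), ∑ i ∈ Finset.Icc (0 : ℤ) (r : ℤ),
                (i : ℂ) * q k i j := by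
                refine Finset.sum_congr rfl fun j _ => ?_
                exact stmt10_shift (r : ℤ) (fun i => q k i j) (hout _ _ (by omega))
            _ = ∑ i ∈ Finset.Icc (0 : ℤ) (r : ℤ), ∑ j ∈ Finset.Icc (0 : ℤ) (r : ℤ),
                (i : ℂ) * q k i j := Finset.sum_comm
        have hB : ∑ i ∈ Finset.Icc (0 : ℤ) (r : ℤ), ∑ j ∈ Finset.Icc (0 : ℤ) (r : ℤ),
            ((j : ℂ) + 1) * q k i (j + 1)
            = ∑ i ∈ Finset.Icc (0 : ℤ) (r : ℤ), ∑ j ∈ Finset.Icc (0 : ℤ) (r : ℤ),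
              (j : ℂ) * q k i j := by
          refine Finset.sum_congr rfl fun i _ => ?_
          exact stmt10_shift (r : ℤ) (fun j => q k i j) (hout _ _ (by omega))
        simp only [Finset.sum_add_distrib]
        rw [hA, hB]
    _ = ((2 * (m : ℤ) + k : ℤ) : ℂ) *
        ∑ i ∈ Finset.Icc (0 : ℤ) (r : ℤ), ∑ j ∈ Finset.Icc (0 : ℤ) (r : ℤ), q k i j := by
        rw [Finset.mul_sum]
        refine Finset.sum_congr rfl fun i _ => ?_
        rw [Finset.mul_sum]
        refine Finset.sum_congr rfl fun j _ => ?_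
        by_cases hz : q k i j = 0
        · simp [hz]
        · have hij : i + j = 2 * (m : ℤ) + k := by
            by_contra hne; exact hz (hmain k i j hne)
          rw [← hij]
          push_cast
          ring

/-- All grid sums vanish when `m ≥ 1`. -/
lemma stmt10_Tzero {r m : ℕ} {q : ℤ → ℤ → ℤ → ℂ} (hq : IsCoeffFamily r m q)
    (hm1 : 1 ≤ m)
    (hmain : ∀ k i j : ℤ, (i + j ≠ 2 * (m : ℤ) + k) → q k i j = 0) :
    ∀ k : ℤ, 0 ≤ k → k ≤ famN r m →
      ∑ i ∈ Finset.Icc (0 : ℤ) (r : ℤ), ∑ j ∈ Finset.Icc (0 : ℤ) (r : ℤ), q k i j = 0 := by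
  have key : ∀ k : ℤ, 0 ≤ k →
      (k ≤ famN r m →
        ∑ i ∈ Finset.Icc (0 : ℤ) (r : ℤ), ∑ j ∈ Finset.Icc (0 : ℤ) (r : ℤ), q k i j = 0) := by
    refine Int.le_induction ?_ ?_
    · intro h0
      have := stmt10_Trel hq hmain 0 le_rfl h0
      have hne : ((2 * (m : ℤ) + 0 : ℤ) : ℂ) ≠ 0 := by
        rw [Int.cast_ne_zero]; omega
      have h' := this
      rw [Int.cast_zero, zero_mul] at h'
      exact ((mul_eq_zero.mp h'.symm).resolve_left hne)
    · intro k hk ih hk1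
      have hkn : k ≤ famN r m := by omega
      have := stmt10_Trel hq hmain (k + 1) (by omega) hk1
      rw [add_sub_cancel_right, ih hkn, mul_zero] at this
      have hne : ((2 * (m : ℤ) + (k + 1) : ℤ) : ℂ) ≠ 0 := by
        rw [Int.cast_ne_zero]; omega
      exact (mul_eq_zero.mp this.symm).resolve_left hne
  exact fun k hk => key k hk


/-- for `m ≥ 1`, the anti-diagonal sums of every `q_k` vanish, hence the
Veronese curve `c_r` lies in `M_m`. -/
theorem stmt10 (r m : ℕ) (hr : 2 ≤ r) (hm : 2 * m ≤ r) (hm1 : 1 ≤ m)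
    (q : ℤ → ℤ → ℤ → ℂ) (hq : IsCoeffFamily r m q) :
    (∀ k : ℤ, 0 ≤ k → k ≤ famN r m →
      ∑ i ∈ Finset.Icc (0 : ℤ) (r : ℤ), q k i (2 * (m : ℤ) + k - i) = 0) ∧
    (∀ t : ℂ, ∀ k : ℤ, 0 ≤ k → k ≤ famN r m →
      ∑ i ∈ Finset.Icc (0 : ℤ) (r : ℤ), ∑ j ∈ Finset.Icc (0 : ℤ) (r : ℤ),
        q k i j * t ^ i.toNat * t ^ j.toNat = 0) := by
  have hmain := stmt10_support hq
  have hT := stmt10_Tzero hq hm1 hmain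
  constructor
  · intro k hk0 hkn
    rw [← hT k hk0 hkn]
    refine Finset.sum_congr rfl fun i hi => ?_
    by_cases hjr : 0 ≤ 2 * (m : ℤ) + k - i ∧ 2 * (m : ℤ) + k - i ≤ (r : ℤ)
    · rw [Finset.sum_eq_single (2 * (m : ℤ) + k - i)]
      · intro j hj hne
        exact hmain k i j (by omega)
      · intro h
        exact absurd (Finset.mem_Icc.mpr ⟨hjr.1, hjr.2⟩) h
    · rw [hq.1 k i (2 * (m : ℤ) + k - i) (by rintro ⟨_,_,_,_,_,_⟩; omega)]
      refine (Finset.sum_eq_zero fun j hj => ?_).symm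
      simp only [Finset.mem_Icc] at hj
      exact hmain k i j (by omega)
  · intro t k hk0 hkn
    have : ∑ i ∈ Finset.Icc (0 : ℤ) (r : ℤ), ∑ j ∈ Finset.Icc (0 : ℤ) (r : ℤ),
        q k i j * t ^ i.toNat * t ^ j.toNat
        = t ^ (2 * (m : ℤ) + k).toNat *
          ∑ i ∈ Finset.Icc (0 : ℤ) (r : ℤ), ∑ j ∈ Finset.Icc (0 : ℤ) (r : ℤ), q k i j := by
      rw [Finset.mul_sum]
      refine Finset.sum_congr rfl fun i hi => ?_
      rw [Finset.mul_sum]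
      refine Finset.sum_congr rfl fun j hj => ?_
      by_cases hz : q k i j = 0
      · simp [hz]
      · have hij : i + j = 2 * (m : ℤ) + k := by
          by_contra hne; exact hz (hmain k i j hne)
        simp only [Finset.mem_Icc] at hi hj
        have hpow : i.toNat + j.toNat = (2 * (m : ℤ) + k).toNat := by omega
        rw [← hpow, pow_add]
        ring
    rw [this, hT k hk0 hkn, mul_zero]
end
end

section
/- Suppose m ≥ 1, and let q be any coefficient family. For all t, μ_0, μ_1, …, μ_{m−1} ∈ ℂ, define a ∈ ℂ^{r+1} by a_i = Σ_{l=0}^{m−1} μ_l · (i·(i−1)···(i−l+1)) · t^{i−l} for 0 ≤ i ≤ r (the descending factorial i·(i−1)···(i−l+1) being 0 when l > i, and t^0 = 1). Then Q_k(a) = Σ_{0≤i,j≤r} q_k(i,j)·a_i·a_j = 0 for every 0 ≤ k ≤ n. (That is, the (m−1)-st osculating variety T^{m−1}c_r of the Veronese curve is contained in M_m.) -/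
open Finset

noncomputable section

/-! ### Auxiliary lemmas -/

lemma prod_eq_choose (i : ℤ) (hi : 0 ≤ i) (l : ℕ) :
    (∏ d ∈ Finset.range l, ((i : ℂ) - (d : ℂ)))
      = (l.factorial : ℂ) * (i.toNat.choose l : ℂ) := by
  induction l with
  | zero => simp
  | succ l ih =>
    rw [Finset.prod_range_succ, ih]
    have hic : (i : ℂ) = (i.toNat : ℂ) := by
      rw [← Int.toNat_of_nonneg hi]; push_cast; rfl
    set n := i.toNat with hn
    rcases lt_or_ge n l with h | h
    · have h1 : n.choose l = 0 := Nat.choose_eq_zero_of_lt h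
      have h2 : n.choose (l+1) = 0 := Nat.choose_eq_zero_of_lt (by omega)
      simp [h1, h2]
    · have key := Nat.choose_succ_right_eq n l
      have key2 : ((n.choose (l+1) * (l+1) : ℕ) : ℂ) = ((n.choose l * (n - l) : ℕ) : ℂ) := by
        exact_mod_cast congrArg (Nat.cast (R := ℂ)) key
      push_cast [Nat.cast_sub h] at key2
      rw [hic]
      push_cast [Nat.factorial_succ]
      linear_combination (-(l.factorial : ℂ)) * key2

lemma choose_shift (i : ℤ) (hi : 0 ≤ i) (b : ℕ) :
    (i : ℂ) * ((i - 1).toNat.choose b : ℂ) = ((i : ℂ) - b) * (i.toNat.choose b : ℂ) := by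
  rcases eq_or_lt_of_le hi with h | h
  · subst h
    cases b <;> simp
  · have h1 : (1:ℤ) ≤ i := h
    obtain ⟨n, hn⟩ : ∃ n : ℕ, i = (n : ℤ) + 1 := ⟨(i-1).toNat, by omega⟩
    subst hn
    have h2 : (((n:ℤ) + 1) - 1).toNat = n := by omega
    have h3 : ((n:ℤ) + 1).toNat = n + 1 := by omega
    rw [h2, h3]
    rcases le_or_gt b (n+1) with hb | hb
    · have key := Nat.choose_mul_succ_eq n b
      have key2 : ((n.choose b * (n+1) : ℕ) : ℂ) = (((n+1).choose b * (n + 1 - b) : ℕ) : ℂ) := by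
        exact_mod_cast congrArg (Nat.cast (R := ℂ)) key
      push_cast [Nat.cast_sub hb] at key2
      push_cast
      linear_combination key2
    · have hz1 : n.choose b = 0 := Nat.choose_eq_zero_of_lt (by omega)
      have hz2 : (n+1).choose b = 0 := Nat.choose_eq_zero_of_lt hb
      simp [hz1, hz2]

lemma shift_sum (r : ℕ) (g : ℤ → ℂ) (h0 : g 0 = 0) (htop : g ((r : ℤ) + 1) = 0) :
    ∑ i ∈ Icc (0 : ℤ) (r : ℤ), g (i + 1) = ∑ i ∈ Icc (0 : ℤ) (r : ℤ), g i := by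
  have e1 : ∑ i ∈ Icc (0 : ℤ) (r : ℤ), g (i + 1) = ∑ i ∈ Icc (1 : ℤ) ((r : ℤ) + 1), g i := by
    have hmap : Icc (1 : ℤ) ((r : ℤ) + 1)
        = Finset.map (addRightEmbedding 1) (Icc (0 : ℤ) (r : ℤ)) := by
      rw [Finset.map_add_right_Icc]; norm_num
    rw [hmap, Finset.sum_map]
    simp [addRightEmbedding_apply]
  have e2 : Icc (1 : ℤ) ((r : ℤ) + 1) = insert ((r : ℤ) + 1) (Icc 1 (r : ℤ)) := by
    ext x; simp only [mem_Icc, mem_insert]; omega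
  have e3 : Icc (0 : ℤ) (r : ℤ) = insert 0 (Icc 1 (r : ℤ)) := by
    ext x; simp only [mem_Icc, mem_insert]; omega
  rw [e1, e2, Finset.sum_insert (by simp), htop, zero_add]
  conv_rhs => rw [e3]
  rw [Finset.sum_insert (by simp), h0, zero_add]

/-- The pairing of `q k` against products of binomial coefficients. -/
noncomputable def Gq (r : ℕ) (q : ℤ → ℤ → ℤ → ℂ) (k : ℤ) (b c : ℕ) : ℂ :=
  ∑ i ∈ Icc (0 : ℤ) (r : ℤ), ∑ j ∈ Icc (0 : ℤ) (r : ℤ),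
    q k i j * (i.toNat.choose b : ℂ) * (j.toNat.choose c : ℂ)

lemma q_support (r m : ℕ) (q : ℤ → ℤ → ℤ → ℂ) (hq : IsCoeffFamily r m q)
    (k i j : ℤ) (hk0 : 0 ≤ k) (hkn : k ≤ famN r m) (hi0 : 0 ≤ i) (hir : i ≤ (r : ℤ))
    (hj0 : 0 ≤ j) (hjr : j ≤ (r : ℤ)) (hne : i + j ≠ k + 2 * (m : ℤ)) :
    q k i j = 0 := by
  have h := hq.2.2.2 k i j hk0 hkn hi0 hir hj0 hjr
  have hz : (famN r m - 2 * k - 2 * (r : ℤ) + 2 * i + 2 * j : ℤ) ≠ 0 := by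
    unfold famN at *; omega
  have hz' : ((famN r m - 2 * k - 2 * (r : ℤ) + 2 * i + 2 * j : ℤ) : ℂ) ≠ 0 :=
    Int.cast_ne_zero.mpr hz
  exact (mul_eq_zero.mp h).resolve_left hz'

lemma G_rec (r m : ℕ) (q : ℤ → ℤ → ℤ → ℂ) (hq : IsCoeffFamily r m q)
    (k : ℤ) (hk0 : 0 ≤ k) (hkn : k ≤ famN r m) (b c : ℕ) :
    (k : ℂ) * Gq r q (k - 1) b c
      = ((k + 2 * (m : ℤ) - (b : ℤ) - (c : ℤ) : ℤ) : ℂ) * Gq r q k b c := by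
  obtain ⟨hvan, hR1, _hR2, hR3⟩ := hq
  have step1 : (k : ℂ) * Gq r q (k - 1) b c
      = (∑ i ∈ Icc (0 : ℤ) (r : ℤ), ∑ j ∈ Icc (0 : ℤ) (r : ℤ),
          ((i : ℂ) + 1) * q k (i + 1) j * (i.toNat.choose b : ℂ) * (j.toNat.choose c : ℂ))
        + (∑ i ∈ Icc (0 : ℤ) (r : ℤ), ∑ j ∈ Icc (0 : ℤ) (r : ℤ),
          ((j : ℂ) + 1) * q k i (j + 1) * (i.toNat.choose b : ℂ) * (j.toNat.choose c : ℂ)) := by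
    unfold Gq
    rw [Finset.mul_sum, ← Finset.sum_add_distrib]
    refine Finset.sum_congr rfl fun i hi => ?_
    rw [Finset.mul_sum, ← Finset.sum_add_distrib]
    refine Finset.sum_congr rfl fun j hj => ?_
    simp only [mem_Icc] at hi hj
    have h1 := hR1 k i j hk0 hkn hi.1 hi.2 hj.1 hj.2
    calc (k:ℂ) * (q (k-1) i j * (i.toNat.choose b : ℂ) * (j.toNat.choose c : ℂ))
        = ((k:ℂ) * q (k-1) i j) * (i.toNat.choose b : ℂ) * (j.toNat.choose c : ℂ) := by ring
      _ = _ := by rw [h1]; ring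
  have p1 : (∑ i ∈ Icc (0 : ℤ) (r : ℤ), ∑ j ∈ Icc (0 : ℤ) (r : ℤ),
          ((i : ℂ) + 1) * q k (i + 1) j * (i.toNat.choose b : ℂ) * (j.toNat.choose c : ℂ))
      = ∑ i ∈ Icc (0 : ℤ) (r : ℤ), ∑ j ∈ Icc (0 : ℤ) (r : ℤ),
          (i : ℂ) * q k i j * ((i - 1).toNat.choose b : ℂ) * (j.toNat.choose c : ℂ) := by
    have hs := shift_sum r (fun i => ∑ j ∈ Icc (0 : ℤ) (r : ℤ),
        (i : ℂ) * q k i j * ((i - 1).toNat.choose b : ℂ) * (j.toNat.choose c : ℂ))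
      (by simp) (by
        refine Finset.sum_eq_zero fun j hj => ?_
        have hz : q k ((r:ℤ)+1) j = 0 := hvan _ _ _ (by rintro ⟨-, -, -, h, -⟩; omega)
        rw [hz]; ring)
    rw [← hs]
    refine Finset.sum_congr rfl fun i hi => Finset.sum_congr rfl fun j hj => ?_
    simp only [add_sub_cancel_right]
    push_cast
    ring
  have p2 : (∑ i ∈ Icc (0 : ℤ) (r : ℤ), ∑ j ∈ Icc (0 : ℤ) (r : ℤ),
          ((j : ℂ) + 1) * q k i (j + 1) * (i.toNat.choose b : ℂ) * (j.toNat.choose c : ℂ))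
      = ∑ i ∈ Icc (0 : ℤ) (r : ℤ), ∑ j ∈ Icc (0 : ℤ) (r : ℤ),
          (j : ℂ) * q k i j * (i.toNat.choose b : ℂ) * ((j - 1).toNat.choose c : ℂ) := by
    refine Finset.sum_congr rfl fun i hi => ?_
    have hs := shift_sum r (fun j =>
        (j : ℂ) * q k i j * (i.toNat.choose b : ℂ) * ((j - 1).toNat.choose c : ℂ))
      (by simp) (by
        have hz : q k i ((r:ℤ)+1) = 0 := hvan _ _ _ (by rintro ⟨-, -, -, -, -, h⟩; omega)
        simp only [hz]; ring)
    rw [← hs]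
    refine Finset.sum_congr rfl fun j hj => ?_
    simp only [add_sub_cancel_right]
    push_cast
    ring
  rw [step1, p1, p2]
  unfold Gq
  rw [Finset.mul_sum, ← Finset.sum_add_distrib]
  refine Finset.sum_congr rfl fun i hi => ?_
  rw [Finset.mul_sum, ← Finset.sum_add_distrib]
  refine Finset.sum_congr rfl fun j hj => ?_
  simp only [mem_Icc] at hi hj
  have e1 := choose_shift i hi.1 b
  have e2 := choose_shift j hj.1 c
  by_cases hq0 : q k i j = 0
  · simp [hq0]
  · have hsupp : i + j = k + 2 * (m : ℤ) := by
      by_contra hne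
      exact hq0 (q_support r m q ⟨hvan, hR1, _hR2, hR3⟩ k i j hk0 hkn hi.1 hi.2 hj.1 hj.2 hne)
    have hc : (i : ℂ) + (j : ℂ) = (k : ℂ) + 2 * (m : ℂ) := by
      have hcast : ((i + j : ℤ) : ℂ) = ((k + 2 * (m : ℤ) : ℤ) : ℂ) := by rw [hsupp]
      push_cast at hcast
      exact hcast
    push_cast
    linear_combination (q k i j * (j.toNat.choose c : ℂ)) * e1
      + (q k i j * (i.toNat.choose b : ℂ)) * e2
      + (q k i j * (i.toNat.choose b : ℂ) * (j.toNat.choose c : ℂ)) * hc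

lemma G_vanish (r m : ℕ) (q : ℤ → ℤ → ℤ → ℂ) (hq : IsCoeffFamily r m q)
    (K : ℕ) (hKn : (K : ℤ) ≤ famN r m) (b c : ℕ) (hbc : b + c < 2 * m) :
    Gq r q (K : ℤ) b c = 0 := by
  induction K with
  | zero =>
    have h := G_rec r m q hq 0 le_rfl (by exact_mod_cast hKn) b c
    have hne : (((0 : ℤ) + 2 * (m : ℤ) - (b : ℤ) - (c : ℤ) : ℤ) : ℂ) ≠ 0 :=
      Int.cast_ne_zero.mpr (by omega)
    simp only [Int.cast_zero, zero_mul] at h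
    have := (mul_eq_zero.mp h.symm).resolve_left hne
    simpa using this
  | succ K ih =>
    have hK1 : ((K : ℤ) + 1) ≤ famN r m := by push_cast at hKn ⊢; omega
    have h := G_rec r m q hq ((K : ℤ) + 1) (by omega) hK1 b c
    have he : ((K : ℤ) + 1 - 1) = (K : ℤ) := by ring
    rw [he, ih (by omega)] at h
    have hne : ((((K : ℤ) + 1) + 2 * (m : ℤ) - (b : ℤ) - (c : ℤ) : ℤ) : ℂ) ≠ 0 :=
      Int.cast_ne_zero.mpr (by omega)
    rw [mul_zero] at h
    have := (mul_eq_zero.mp h.symm).resolve_left hne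
    push_cast
    exact this

lemma inner_zero (r m : ℕ) (q : ℤ → ℤ → ℤ → ℂ) (hq : IsCoeffFamily r m q) (hm1 : 1 ≤ m)
    (t : ℂ) (k : ℤ) (hk0 : 0 ≤ k) (hkn : k ≤ famN r m)
    (l l' : ℕ) (hl : l < m) (hl' : l' < m) :
    ∑ i ∈ Icc (0 : ℤ) (r : ℤ), ∑ j ∈ Icc (0 : ℤ) (r : ℤ),
      q k i j * (∏ d ∈ Finset.range l, ((i : ℂ) - (d : ℂ))) * t ^ (i - (l : ℤ)).toNat
        * (∏ d ∈ Finset.range l', ((j : ℂ) - (d : ℂ))) * t ^ (j - (l' : ℤ)).toNat = 0 := by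
  have hmain : ∑ i ∈ Icc (0 : ℤ) (r : ℤ), ∑ j ∈ Icc (0 : ℤ) (r : ℤ),
      q k i j * (∏ d ∈ Finset.range l, ((i : ℂ) - (d : ℂ))) * t ^ (i - (l : ℤ)).toNat
        * (∏ d ∈ Finset.range l', ((j : ℂ) - (d : ℂ))) * t ^ (j - (l' : ℤ)).toNat
      = (t ^ (k + 2 * (m : ℤ) - l - l').toNat * ((l.factorial : ℂ) * (l'.factorial : ℂ)))
          * Gq r q k l l' := by
    unfold Gq
    rw [Finset.mul_sum]
    refine Finset.sum_congr rfl fun i hi => ?_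
    rw [Finset.mul_sum]
    refine Finset.sum_congr rfl fun j hj => ?_
    simp only [mem_Icc] at hi hj
    rw [prod_eq_choose i hi.1 l, prod_eq_choose j hj.1 l']
    by_cases hq0 : q k i j = 0
    · simp [hq0]
    · have hsupp : i + j = k + 2 * (m : ℤ) := by
        by_contra hne
        exact hq0 (q_support r m q hq k i j hk0 hkn hi.1 hi.2 hj.1 hj.2 hne)
      rcases lt_or_ge i.toNat l with hil | hil
      · simp [Nat.choose_eq_zero_of_lt hil]
      rcases lt_or_ge j.toNat l' with hjl | hjl
      · simp [Nat.choose_eq_zero_of_lt hjl]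
      have hexp : (i - (l : ℤ)).toNat + (j - (l' : ℤ)).toNat
          = (k + 2 * (m : ℤ) - l - l').toNat := by omega
      rw [← hexp, pow_add]
      ring
  rw [hmain]
  have hk := G_vanish r m q hq k.toNat (by rw [Int.toNat_of_nonneg hk0]; exact hkn) l l'
    (by omega)
  rw [Int.toNat_of_nonneg hk0] at hk
  rw [hk, mul_zero]

/-- for `m ≥ 1`, every quadric `Q_k` vanishes on the `(m-1)`-st
osculating variety of the Veronese curve, i.e. at the points with coordinates
`a_i = Σ_{l<m} μ_l · i(i-1)⋯(i-l+1) · t^{i-l}`. -/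
theorem stmt11 (r m : ℕ) (hr : 2 ≤ r) (hm : 2 * m ≤ r) (hm1 : 1 ≤ m)
    (q : ℤ → ℤ → ℤ → ℂ) (hq : IsCoeffFamily r m q)
    (t : ℂ) (μ : ℕ → ℂ) :
    ∀ k : ℤ, 0 ≤ k → k ≤ famN r m →
      ∑ i ∈ Finset.Icc (0 : ℤ) (r : ℤ), ∑ j ∈ Finset.Icc (0 : ℤ) (r : ℤ),
        q k i j *
          (∑ l ∈ Finset.range m,
            μ l * (∏ d ∈ Finset.range l, ((i : ℂ) - (d : ℂ))) * t ^ (i - (l : ℤ)).toNat) *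
          (∑ l ∈ Finset.range m,
            μ l * (∏ d ∈ Finset.range l, ((j : ℂ) - (d : ℂ))) * t ^ (j - (l : ℤ)).toNat)
        = 0 := by
  intro k hk0 hkn
  have expand : ∀ i j : ℤ,
      q k i j *
        (∑ l ∈ Finset.range m,
          μ l * (∏ d ∈ Finset.range l, ((i : ℂ) - (d : ℂ))) * t ^ (i - (l : ℤ)).toNat) *
        (∑ l ∈ Finset.range m,
          μ l * (∏ d ∈ Finset.range l, ((j : ℂ) - (d : ℂ))) * t ^ (j - (l : ℤ)).toNat)
      = ∑ l ∈ Finset.range m, ∑ l' ∈ Finset.range m,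
          q k i j * (μ l * (∏ d ∈ Finset.range l, ((i : ℂ) - (d : ℂ))) * t ^ (i - (l : ℤ)).toNat)
            * (μ l' * (∏ d ∈ Finset.range l', ((j : ℂ) - (d : ℂ))) * t ^ (j - (l' : ℤ)).toNat) := by
    intro i j
    rw [mul_assoc, Finset.sum_mul_sum, Finset.mul_sum]
    refine Finset.sum_congr rfl fun l hl => ?_
    rw [Finset.mul_sum]
    refine Finset.sum_congr rfl fun l' hl' => ?_
    ring
  calc ∑ i ∈ Finset.Icc (0 : ℤ) (r : ℤ), ∑ j ∈ Finset.Icc (0 : ℤ) (r : ℤ),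
        q k i j *
          (∑ l ∈ Finset.range m,
            μ l * (∏ d ∈ Finset.range l, ((i : ℂ) - (d : ℂ))) * t ^ (i - (l : ℤ)).toNat) *
          (∑ l ∈ Finset.range m,
            μ l * (∏ d ∈ Finset.range l, ((j : ℂ) - (d : ℂ))) * t ^ (j - (l : ℤ)).toNat)
      = ∑ i ∈ Finset.Icc (0 : ℤ) (r : ℤ), ∑ j ∈ Finset.Icc (0 : ℤ) (r : ℤ),
          ∑ l ∈ Finset.range m, ∑ l' ∈ Finset.range m,
            q k i j * (μ l * (∏ d ∈ Finset.range l, ((i : ℂ) - (d : ℂ))) * t ^ (i - (l : ℤ)).toNat)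
              * (μ l' * (∏ d ∈ Finset.range l', ((j : ℂ) - (d : ℂ))) * t ^ (j - (l' : ℤ)).toNat) := by
        exact Finset.sum_congr rfl fun i _ => Finset.sum_congr rfl fun j _ => expand i j
    _ = ∑ l ∈ Finset.range m, ∑ l' ∈ Finset.range m,
          ∑ i ∈ Finset.Icc (0 : ℤ) (r : ℤ), ∑ j ∈ Finset.Icc (0 : ℤ) (r : ℤ),
            q k i j * (μ l * (∏ d ∈ Finset.range l, ((i : ℂ) - (d : ℂ))) * t ^ (i - (l : ℤ)).toNat)
              * (μ l' * (∏ d ∈ Finset.range l', ((j : ℂ) - (d : ℂ))) * t ^ (j - (l' : ℤ)).toNat) := by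
        calc ∑ i ∈ Finset.Icc (0 : ℤ) (r : ℤ), ∑ j ∈ Finset.Icc (0 : ℤ) (r : ℤ),
              ∑ l ∈ Finset.range m, ∑ l' ∈ Finset.range m,
                q k i j * (μ l * (∏ d ∈ Finset.range l, ((i : ℂ) - (d : ℂ))) * t ^ (i - (l : ℤ)).toNat)
                  * (μ l' * (∏ d ∈ Finset.range l', ((j : ℂ) - (d : ℂ))) * t ^ (j - (l' : ℤ)).toNat)
            = ∑ i ∈ Finset.Icc (0 : ℤ) (r : ℤ), ∑ l ∈ Finset.range m,
                ∑ j ∈ Finset.Icc (0 : ℤ) (r : ℤ), ∑ l' ∈ Finset.range m,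
                q k i j * (μ l * (∏ d ∈ Finset.range l, ((i : ℂ) - (d : ℂ))) * t ^ (i - (l : ℤ)).toNat)
                  * (μ l' * (∏ d ∈ Finset.range l', ((j : ℂ) - (d : ℂ))) * t ^ (j - (l' : ℤ)).toNat) :=
              Finset.sum_congr rfl fun i _ => Finset.sum_comm
          _ = ∑ l ∈ Finset.range m, ∑ i ∈ Finset.Icc (0 : ℤ) (r : ℤ),
                ∑ j ∈ Finset.Icc (0 : ℤ) (r : ℤ), ∑ l' ∈ Finset.range m,
                q k i j * (μ l * (∏ d ∈ Finset.range l, ((i : ℂ) - (d : ℂ))) * t ^ (i - (l : ℤ)).toNat)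
                  * (μ l' * (∏ d ∈ Finset.range l', ((j : ℂ) - (d : ℂ))) * t ^ (j - (l' : ℤ)).toNat) :=
              Finset.sum_comm
          _ = ∑ l ∈ Finset.range m, ∑ i ∈ Finset.Icc (0 : ℤ) (r : ℤ),
                ∑ l' ∈ Finset.range m, ∑ j ∈ Finset.Icc (0 : ℤ) (r : ℤ),
                q k i j * (μ l * (∏ d ∈ Finset.range l, ((i : ℂ) - (d : ℂ))) * t ^ (i - (l : ℤ)).toNat)
                  * (μ l' * (∏ d ∈ Finset.range l', ((j : ℂ) - (d : ℂ))) * t ^ (j - (l' : ℤ)).toNat) :=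
              Finset.sum_congr rfl fun l _ => Finset.sum_congr rfl fun i _ => Finset.sum_comm
          _ = ∑ l ∈ Finset.range m, ∑ l' ∈ Finset.range m,
                ∑ i ∈ Finset.Icc (0 : ℤ) (r : ℤ), ∑ j ∈ Finset.Icc (0 : ℤ) (r : ℤ),
                q k i j * (μ l * (∏ d ∈ Finset.range l, ((i : ℂ) - (d : ℂ))) * t ^ (i - (l : ℤ)).toNat)
                  * (μ l' * (∏ d ∈ Finset.range l', ((j : ℂ) - (d : ℂ))) * t ^ (j - (l' : ℤ)).toNat) :=
              Finset.sum_congr rfl fun l _ => Finset.sum_comm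
    _ = 0 := by
        refine Finset.sum_eq_zero fun l hl => Finset.sum_eq_zero fun l' hl' => ?_
        simp only [mem_range] at hl hl'
        have hz := inner_zero r m q hq hm1 t k hk0 hkn l l' hl hl'
        calc ∑ i ∈ Finset.Icc (0 : ℤ) (r : ℤ), ∑ j ∈ Finset.Icc (0 : ℤ) (r : ℤ),
              q k i j * (μ l * (∏ d ∈ Finset.range l, ((i : ℂ) - (d : ℂ))) * t ^ (i - (l : ℤ)).toNat)
                * (μ l' * (∏ d ∈ Finset.range l', ((j : ℂ) - (d : ℂ))) * t ^ (j - (l' : ℤ)).toNat)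
            = (μ l * μ l') * ∑ i ∈ Finset.Icc (0 : ℤ) (r : ℤ), ∑ j ∈ Finset.Icc (0 : ℤ) (r : ℤ),
                q k i j * (∏ d ∈ Finset.range l, ((i : ℂ) - (d : ℂ))) * t ^ (i - (l : ℤ)).toNat
                  * (∏ d ∈ Finset.range l', ((j : ℂ) - (d : ℂ))) * t ^ (j - (l' : ℤ)).toNat := by
              rw [Finset.mul_sum]
              refine Finset.sum_congr rfl fun i _ => ?_
              rw [Finset.mul_sum]
              refine Finset.sum_congr rfl fun j _ => ?_
              ring
          _ = 0 := by rw [hz, mul_zero]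
end
end

section
/- Let q be the canonical coefficient family with parameter λ ≠ 0. Then there exist t, μ_0, …, μ_m ∈ ℂ such that the point a ∈ ℂ^{r+1} with coordinates a_i = Σ_{l=0}^{m} μ_l · (i·(i−1)···(i−l+1)) · t^{i−l} satisfies Q_0(a) = Σ_{0≤i,j≤r} q_0(i,j)·a_i·a_j ≠ 0; indeed, taking t = 0, μ_m = 1/m! and μ_l = 0 for l < m gives a_i = δ_{i,m} and Q_0(a) = (−1)^m·binom(2m,m)·λ ≠ 0. (That is, M_m does not contain the m-th osculating variety T^m c_r of the Veronese curve.) -/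
open Finset

noncomputable section

/-- `M_m` does not contain the `m`-th osculating variety `T^m c_r`: there
is a point of `T^m c_r` at which `Q_0` does not vanish; indeed the point
`a_i = δ_{i,m}` (obtained from `t = 0`, `μ_m = 1/m!`, `μ_l = 0` for `l < m`) gives
`Q_0(a) = (-1)^m · binom(2m,m) · λ ≠ 0`. -/
theorem stmt12 (r m : ℕ) (hr : 2 ≤ r) (hm : 2 * m ≤ r)
    (lam : ℂ) (hlam : lam ≠ 0)
    (q : ℤ → ℤ → ℤ → ℂ) (hq : IsCanonical r m lam q) :
    (∃ t : ℂ, ∃ μ : ℕ → ℂ,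
      ∑ i ∈ Finset.Icc (0 : ℤ) (r : ℤ), ∑ j ∈ Finset.Icc (0 : ℤ) (r : ℤ),
        q 0 i j *
          (∑ l ∈ Finset.range (m + 1),
            μ l * (∏ d ∈ Finset.range l, ((i : ℂ) - (d : ℂ))) * t ^ (i - (l : ℤ)).toNat) *
          (∑ l ∈ Finset.range (m + 1),
            μ l * (∏ d ∈ Finset.range l, ((j : ℂ) - (d : ℂ))) * t ^ (j - (l : ℤ)).toNat)
        ≠ 0) ∧
    (∑ i ∈ Finset.Icc (0 : ℤ) (r : ℤ), ∑ j ∈ Finset.Icc (0 : ℤ) (r : ℤ),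
        q 0 i j * (if i = (m : ℤ) then 1 else 0) * (if j = (m : ℤ) then 1 else 0)
      = (-1) ^ m * (Nat.choose (2 * m) m : ℂ) * lam) ∧
    ((-1 : ℂ)) ^ m * (Nat.choose (2 * m) m : ℂ) * lam ≠ 0 := by

  obtain ⟨hfam, hq0⟩ := hq
  have hmr : (m : ℤ) ≤ (r : ℤ) := by
    have : m ≤ r := le_trans (by omega) hm
    exact_mod_cast this
  have hmem : (m : ℤ) ∈ Finset.Icc (0 : ℤ) (r : ℤ) := by
    simp only [Finset.mem_Icc]
    exact ⟨by positivity, hmr⟩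
  -- value of q at (0, m, m)
  have hqmm : q 0 (m : ℤ) (m : ℤ) = (-1) ^ m * (Nat.choose (2 * m) m : ℂ) * lam := by
    have h := hq0 (m : ℤ) (m : ℤ) (by positivity) hmr (by positivity) hmr
    rw [h, if_pos (by ring)]
    have h1 : ((m : ℤ)).toNat = m := Int.toNat_natCast m
    have h2 : binomZ (2 * (m : ℤ)) (m : ℤ) = (Nat.choose (2 * m) m : ℂ) := by
      unfold binomZ
      rw [if_pos ⟨by positivity, by omega⟩]
      norm_num
      congr 1
    rw [h1, h2]
  -- descending factorial product
  have hprod : ∏ d ∈ Finset.range m, (((m : ℤ) : ℂ) - (d : ℂ)) = (m.factorial : ℂ) := by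
    have h1 : ∏ d ∈ Finset.range m, (((m : ℤ) : ℂ) - (d : ℂ))
        = ((∏ d ∈ Finset.range m, (m - d) : ℕ) : ℂ) := by
      rw [Nat.cast_prod]
      refine Finset.prod_congr rfl fun d hd => ?_
      rw [Nat.cast_sub (le_of_lt (Finset.mem_range.mp hd))]
      push_cast
      ring
    rw [h1, ← Nat.descFactorial_eq_prod_range, Nat.descFactorial_self]
  have hfac : (m.factorial : ℂ) ≠ 0 := Nat.cast_ne_zero.mpr (Nat.factorial_ne_zero m)
  set μ : ℕ → ℂ := fun l => if l = m then (m.factorial : ℂ)⁻¹ else 0 with hμ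
  -- key: the coordinate function is the delta at m
  have key : ∀ i ∈ Finset.Icc (0 : ℤ) (r : ℤ),
      (∑ l ∈ Finset.range (m + 1),
        μ l * (∏ d ∈ Finset.range l, ((i : ℂ) - (d : ℂ))) * (0 : ℂ) ^ (i - (l : ℤ)).toNat)
      = if i = (m : ℤ) then 1 else 0 := by
    intro i hi
    obtain ⟨hi0, hir⟩ := Finset.mem_Icc.mp hi
    have hsingle : (∑ l ∈ Finset.range (m + 1),
        μ l * (∏ d ∈ Finset.range l, ((i : ℂ) - (d : ℂ))) * (0 : ℂ) ^ (i - (l : ℤ)).toNat)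
        = (m.factorial : ℂ)⁻¹ * (∏ d ∈ Finset.range m, ((i : ℂ) - (d : ℂ)))
            * (0 : ℂ) ^ (i - (m : ℤ)).toNat := by
      rw [Finset.sum_eq_single_of_mem m (Finset.self_mem_range_succ m)]
      · simp [hμ]
      · intro l hl hlm
        simp [hμ, hlm]
    rw [hsingle]
    by_cases him : i = (m : ℤ)
    · subst him
      rw [if_pos rfl]
      simp only [sub_self, Int.toNat_zero, pow_zero, mul_one]
      rw [hprod]
      exact inv_mul_cancel₀ hfac
    · rw [if_neg him]
      rcases lt_or_gt_of_ne him with hlt | hgt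
      · -- i < m : the product vanishes at d = i.toNat
        have hitn : i.toNat < m := by omega
        have : (∏ d ∈ Finset.range m, ((i : ℂ) - (d : ℂ))) = 0 := by
          apply Finset.prod_eq_zero (Finset.mem_range.mpr hitn)
          have : ((i.toNat : ℤ) : ℂ) = (i : ℂ) := by
            norm_cast
            omega
          rw [show ((i.toNat : ℕ) : ℂ) = (i : ℂ) by exact_mod_cast this]
          ring
        rw [this]
        ring
      · -- i > m : zero power positive
        have : (0 : ℂ) ^ (i - (m : ℤ)).toNat = 0 := by
          apply zero_pow
          omega
        rw [this]
        ring
  -- the delta double sum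
  have hsum2 : (∑ i ∈ Finset.Icc (0 : ℤ) (r : ℤ), ∑ j ∈ Finset.Icc (0 : ℤ) (r : ℤ),
      q 0 i j * (if i = (m : ℤ) then 1 else 0) * (if j = (m : ℤ) then 1 else 0))
      = q 0 (m : ℤ) (m : ℤ) := by
    rw [Finset.sum_eq_single_of_mem (m : ℤ) hmem]
    · rw [Finset.sum_eq_single_of_mem (m : ℤ) hmem]
      · simp
      · intro j _ hj
        simp [hj]
    · intro i _ hi
      apply Finset.sum_eq_zero
      intro j _
      simp [hi]
  have hchoose : (Nat.choose (2 * m) m : ℂ) ≠ 0 :=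
    Nat.cast_ne_zero.mpr (Nat.choose_pos (by omega)).ne'
  have hne : ((-1 : ℂ)) ^ m * (Nat.choose (2 * m) m : ℂ) * lam ≠ 0 := by
    apply mul_ne_zero (mul_ne_zero _ hchoose) hlam
    exact pow_ne_zero m (by norm_num)
  refine ⟨⟨0, μ, ?_⟩, ?_, hne⟩
  · have heq : (∑ i ∈ Finset.Icc (0 : ℤ) (r : ℤ), ∑ j ∈ Finset.Icc (0 : ℤ) (r : ℤ),
        q 0 i j *
          (∑ l ∈ Finset.range (m + 1),
            μ l * (∏ d ∈ Finset.range l, ((i : ℂ) - (d : ℂ))) * (0:ℂ) ^ (i - (l : ℤ)).toNat) *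
          (∑ l ∈ Finset.range (m + 1),
            μ l * (∏ d ∈ Finset.range l, ((j : ℂ) - (d : ℂ))) * (0:ℂ) ^ (j - (l : ℤ)).toNat))
        = q 0 (m : ℤ) (m : ℤ) := by
      rw [← hsum2]
      refine Finset.sum_congr rfl fun i hi => Finset.sum_congr rfl fun j hj => ?_
      rw [key i hi, key j hj]
    rw [heq, hqmm]
    exact hne
  · rw [hsum2, hqmm]
end
end

section
/- Suppose r ≥ 5 is odd and m = (r−1)/2 (so n = 2), and let q be the canonical coefficient family with parameter λ ≠ 0. Let p ∈ ℂ^{r+1} have coordinates p_0 = p_{m−1} = 1 and p_i = 0 otherwise. Then Q_k(p) = Σ_{0≤i,j≤r} q_k(i,j)·p_i·p_j = 0 for k = 0, 1, 2 (so p lies on the affine cone of M_m), and the 3×(r+1) Jacobian matrix J with entries J_{k,i} = 2·q_k(i, 2m+k−i)·p_{2m+k−i} (entries with 2m+k−i outside {0,…,r} being 0) has rank 3. (This shows M_m ⊆ ℙ^r has codimension 3, hence degree 8.) -/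
open Finset

noncomputable section

/-- The point `p` with `p_0 = p_{m-1} = 1` and all other coordinates `0`. -/
def pPoint (m : ℕ) : ℤ → ℂ := fun i => if i = 0 ∨ i = (m : ℤ) - 1 then 1 else 0

lemma aux_rank {N : ℕ} (A : Matrix (Fin 3) (Fin N) ℂ) (c : Fin 3 → Fin N)
    (h10 : A 1 (c 0) = 0) (h20 : A 2 (c 0) = 0) (h21 : A 2 (c 1) = 0)
    (h00 : A 0 (c 0) ≠ 0) (h11 : A 1 (c 1) ≠ 0) (h22 : A 2 (c 2) ≠ 0) :
    A.rank = 3 := by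
  classical
  set E : Matrix (Fin N) (Fin 3) ℂ := Matrix.of (fun i l => if i = c l then 1 else 0) with hE
  have hAE : ∀ k l, (A * E) k l = A k (c l) := by
    intro k l
    rw [Matrix.mul_apply]
    simp [hE, mul_ite, mul_one, mul_zero, Finset.sum_ite_eq']
  have hdet : (A * E).det ≠ 0 := by
    rw [Matrix.det_fin_three, hAE, hAE, hAE, hAE, hAE, hAE, hAE, hAE, hAE,
      h10, h20, h21]
    have : A 0 (c 0) * A 1 (c 1) * A 2 (c 2) - A 0 (c 0) * A 1 (c 2) * 0 -
        A 0 (c 1) * 0 * A 2 (c 2) + A 0 (c 1) * A 1 (c 2) * 0 +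
        A 0 (c 2) * 0 * 0 - A 0 (c 2) * A 1 (c 1) * 0
        = A 0 (c 0) * A 1 (c 1) * A 2 (c 2) := by ring
    rw [this]
    exact mul_ne_zero (mul_ne_zero h00 h11) h22
  have hu : IsUnit (A * E) := (Matrix.isUnit_iff_isUnit_det _).mpr (isUnit_iff_ne_zero.mpr hdet)
  have h3 : (A * E).rank = 3 := by rw [Matrix.rank_of_isUnit _ hu, Fintype.card_fin]
  have h4 : (A * E).rank ≤ A.rank := Matrix.rank_mul_le_left A E
  have h5 : A.rank ≤ 3 := le_trans (Matrix.rank_le_card_height A) (by simp)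
  omega


/-- for `r ≥ 5` odd, `m = (r-1)/2` (so `n = 2`), the point `p` with
`p_0 = p_{m-1} = 1` lies on the affine cone of `M_m` and the Jacobian of
`(Q_0, Q_1, Q_2)` at `p` has rank `3` (hence `M_m` has codimension `3` and degree `8`). -/
theorem stmt14 (r m : ℕ) (hr : 5 ≤ r) (hrm : r = 2 * m + 1)
    (lam : ℂ) (hlam : lam ≠ 0)
    (q : ℤ → ℤ → ℤ → ℂ) (hq : IsCanonical r m lam q) :
    (∀ k : ℤ, 0 ≤ k → k ≤ 2 →
      ∑ i ∈ Finset.Icc (0 : ℤ) (r : ℤ), ∑ j ∈ Finset.Icc (0 : ℤ) (r : ℤ),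
        q k i j * pPoint m i * pPoint m j = 0) ∧
    (Matrix.of fun (k : Fin 3) (i : Fin (r + 1)) =>
        2 * q ((k : ℕ) : ℤ) ((i : ℕ) : ℤ)
            (2 * (m : ℤ) + ((k : ℕ) : ℤ) - ((i : ℕ) : ℤ))
          * pPoint m (2 * (m : ℤ) + ((k : ℕ) : ℤ) - ((i : ℕ) : ℤ))).rank = 3 := by
  subst hrm
  have hm : 2 ≤ m := by omega
  obtain ⟨⟨hvan, hR1, hR2, hR3⟩, h0⟩ := hq
  have hn : famN (2 * m + 1) m = 2 := by unfold famN; push_cast; ring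
  simp only [hn] at hvan hR2 hR3
  -- support lemma
  have hsupp : ∀ k i j : ℤ, 0 ≤ k → k ≤ 2 → 0 ≤ i → i ≤ ((2 * m + 1 : ℕ) : ℤ) →
      0 ≤ j → j ≤ ((2 * m + 1 : ℕ) : ℤ) → i + j ≠ 2 * (m : ℤ) + k → q k i j = 0 := by
    intro k i j hk hk2 hi hi2 hj hj2 hne
    have h3 := hR3 k i j hk hk2 hi hi2 hj hj2
    have hne' : ((2 - 2 * k - 2 * ((2 * m + 1 : ℕ) : ℤ) + 2 * i + 2 * j : ℤ) : ℂ) ≠ 0 := by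
      rw [Int.cast_ne_zero]; push_cast; push_cast at hi2 hj2; omega
    exact (mul_eq_zero.mp h3).resolve_left hne'
  constructor
  · intro k hk hk2
    apply Finset.sum_eq_zero
    intro i hi
    apply Finset.sum_eq_zero
    intro j hj
    simp only [Finset.mem_Icc] at hi hj
    by_cases hpi : pPoint m i = 0
    · simp [hpi]
    by_cases hpj : pPoint m j = 0
    · simp [hpj]
    have hi' : i = 0 ∨ i = (m : ℤ) - 1 := by
      by_contra h; exact hpi (by simp only [pPoint, if_neg h])
    have hj' : j = 0 ∨ j = (m : ℤ) - 1 := by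
      by_contra h; exact hpj (by simp only [pPoint, if_neg h])
    have : q k i j = 0 := by
      apply hsupp k i j hk hk2 hi.1 hi.2 hj.1 hj.2
      rcases hi' with h | h <;> rcases hj' with h' | h' <;> omega
    simp [this]
  · -- Part 2: rank of Jacobian
    -- abbreviations
    set c0 : ℂ := ((2*m).choose (m+1) : ℂ) with hc0def
    set c1 : ℂ := ((2*m).choose (m+2) : ℂ) with hc1def
    set c2 : ℂ := ((2*m).choose (m+3) : ℂ) with hc2def
    -- level-0 values
    have hq0 : ∀ i j : ℤ, 0 ≤ i → i ≤ 2*(m:ℤ) → i + j = 2*(m:ℤ) →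
        q 0 i j = (-1)^(i.toNat) * ((2*m).choose i.toNat : ℂ) * lam := by
      intro i j h1 h2 h3
      have h4 := h0 i j h1 (by push_cast; omega) (by omega) (by push_cast; omega)
      rw [if_pos h3] at h4
      rw [h4, binomZ, if_pos ⟨h1, h2⟩, show (2*(m:ℤ)).toNat = 2*m from by omega]
    have e0 : q 0 ((m:ℤ)+1) ((m:ℤ)-1) = (-1)^(m+1) * c0 * lam := by
      have h := hq0 ((m:ℤ)+1) ((m:ℤ)-1) (by omega) (by omega) (by ring)
      rwa [show ((m:ℤ)+1).toNat = m+1 from by omega] at h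
    have ew : q 0 ((m:ℤ)+2) ((m:ℤ)-2) = (-1)^(m+2) * c1 * lam := by
      have h := hq0 ((m:ℤ)+2) ((m:ℤ)-2) (by omega) (by omega) (by ring)
      rwa [show ((m:ℤ)+2).toNat = m+2 from by omega] at h
    have ez : q 0 ((m:ℤ)+3) ((m:ℤ)-3) = (-1)^(m+3) * c2 * lam := by
      by_cases h3 : 3 ≤ m
      · have h := hq0 ((m:ℤ)+3) ((m:ℤ)-3) (by omega) (by omega) (by ring)
        rwa [show ((m:ℤ)+3).toNat = m+3 from by omega] at h
      · have hm2 : m = 2 := by omega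
        have hz : q 0 ((m:ℤ)+3) ((m:ℤ)-3) = 0 := by
          apply hvan
          push_cast
          omega
        rw [hz, hc2def, Nat.choose_eq_zero_of_lt (by omega), Nat.cast_zero]
        ring
    -- recurrence instances
    have e1 := hR2 0 ((m:ℤ)+2) ((m:ℤ)-1) le_rfl (by norm_num) (by omega)
      (by push_cast; omega) (by omega) (by push_cast; omega)
    rw [zero_add, show ((m:ℤ)+2)-1 = (m:ℤ)+1 from by ring,
      show ((m:ℤ)-1)-1 = (m:ℤ)-2 from by ring] at e1
    push_cast at e1
    have eu := hR2 0 ((m:ℤ)+3) ((m:ℤ)-2) le_rfl (by norm_num) (by omega)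
      (by push_cast; omega) (by omega) (by push_cast; omega)
    rw [zero_add, show ((m:ℤ)+3)-1 = (m:ℤ)+2 from by ring,
      show ((m:ℤ)-2)-1 = (m:ℤ)-3 from by ring] at eu
    push_cast at eu
    have e2 := hR2 1 ((m:ℤ)+3) ((m:ℤ)-1) (by norm_num) (by norm_num) (by omega)
      (by push_cast; omega) (by omega) (by push_cast; omega)
    rw [show (1:ℤ)+1 = (2:ℤ) from by norm_num, show ((m:ℤ)+3)-1 = (m:ℤ)+2 from by ring,
      show ((m:ℤ)-1)-1 = (m:ℤ)-2 from by ring] at e2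
    push_cast at e2
    -- binomial relations
    have r1 : c1 * ((m:ℂ)+2) = c0 * ((m:ℂ)-1) := by
      have h := Nat.choose_succ_right_eq (2*m) (m+1)
      rw [show 2*m - (m+1) = m-1 from by omega, show m+1+1 = m+2 from rfl] at h
      have h2 := congrArg (Nat.cast (R := ℂ)) h
      push_cast [Nat.cast_sub (by omega : 1 ≤ m)] at h2
      rw [hc0def, hc1def]
      linear_combination h2
    have r2 : c2 * ((m:ℂ)+3) = c1 * ((m:ℂ)-2) := by
      have h := Nat.choose_succ_right_eq (2*m) (m+2)
      rw [show 2*m - (m+2) = m-2 from by omega, show m+2+1 = m+3 from rfl] at h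
      have h2 := congrArg (Nat.cast (R := ℂ)) h
      push_cast [Nat.cast_sub (by omega : 2 ≤ m)] at h2
      rw [hc1def, hc2def]
      linear_combination h2
    -- nonzero facts
    have hc0ne : c0 ≠ 0 := by
      rw [hc0def]; exact Nat.cast_ne_zero.mpr (Nat.choose_pos (by omega)).ne'
    have hsne : ((-1:ℂ))^(m+1) ≠ 0 := pow_ne_zero _ (by norm_num)
    have hM1 : ((m:ℂ) - 1) ≠ 0 := by
      intro h
      rw [sub_eq_zero] at h
      exact (by omega : m ≠ 1) (by exact_mod_cast h)
    have hM2 : ((m:ℂ) + 2) ≠ 0 := by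
      have h : ((m:ℂ)+2) = ((m+2:ℕ):ℂ) := by push_cast; ring
      rw [h]; exact Nat.cast_ne_zero.mpr (by omega)
    have hM3 : ((m:ℂ) + 3) ≠ 0 := by
      have h : ((m:ℂ)+3) = ((m+3:ℕ):ℂ) := by push_cast; ring
      rw [h]; exact Nat.cast_ne_zero.mpr (by omega)
    -- values of q at the three diagonal positions
    have hv0ne : q 0 ((m:ℤ)+1) ((m:ℤ)-1) ≠ 0 := by
      rw [e0]; exact mul_ne_zero (mul_ne_zero hsne hc0ne) hlam
    have hv1val : 2 * q 1 ((m:ℤ)+2) ((m:ℤ)-1)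
        = (-1)^(m+1) * lam * ((m:ℂ) * c0 - ((m:ℂ)+3) * c1) := by
      linear_combination e1 + (m:ℂ) * e0 + ((m:ℂ)+3) * ew
    have key1 : q 1 ((m:ℤ)+2) ((m:ℤ)-1) * (2*((m:ℂ)+2))
        = 3 * (-1)^(m+1) * c0 * lam := by
      linear_combination ((m:ℂ)+2) * hv1val - ((-1:ℂ))^(m+1) * lam * ((m:ℂ)+3) * r1
    have hv1ne : q 1 ((m:ℤ)+2) ((m:ℤ)-1) ≠ 0 := by
      intro h
      rw [h, zero_mul] at key1
      exact mul_ne_zero (mul_ne_zero (mul_ne_zero (by norm_num) hsne) hc0ne) hlam key1.symm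
    have huval : 2 * q 1 ((m:ℤ)+3) ((m:ℤ)-2)
        = (-1)^(m+1) * lam * (-((m:ℂ)-1) * c1 + ((m:ℂ)+4) * c2) := by
      linear_combination eu + ((m:ℂ)-1) * ew + ((m:ℂ)+4) * ez
    have hv2val : 2 * q 2 ((m:ℤ)+3) ((m:ℤ)-1)
        = (-1)^(m+1) * lam * ((m:ℂ)*((m:ℂ)-1)*c0 - 2*((m:ℂ)-1)*((m:ℂ)+3)*c1
            + ((m:ℂ)+3)*((m:ℂ)+4)*c2) := by
      linear_combination 2 * e2 + ((m:ℂ)-1) * hv1val + ((m:ℂ)+3) * huval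
    have key2 : q 2 ((m:ℤ)+3) ((m:ℤ)-1) * (2*((m:ℂ)+2)^2*((m:ℂ)+3))
        = -2 * (-1)^(m+1) * lam * c0 * ((m:ℂ)+2) * ((m:ℂ)-1) * ((m:ℂ)+3) := by
      linear_combination ((m:ℂ)+2)^2*((m:ℂ)+3) * hv2val
        + ((-1:ℂ))^(m+1) * lam * (((m:ℂ)+2)*((m:ℂ)+3)*(-((m:ℂ)^2)-2*(m:ℂ)-2)) * r1
        + ((-1:ℂ))^(m+1) * lam * (((m:ℂ)+2)^2*((m:ℂ)+3)*((m:ℂ)+4)) * r2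
    have hv2ne : q 2 ((m:ℤ)+3) ((m:ℤ)-1) ≠ 0 := by
      intro h
      rw [h, zero_mul] at key2
      refine mul_ne_zero (mul_ne_zero (mul_ne_zero (mul_ne_zero (mul_ne_zero
        (mul_ne_zero (by norm_num) hsne) hlam) hc0ne) hM2) hM1) hM3 key2.symm
    -- pPoint values
    have hpm1 : pPoint m ((m:ℤ)-1) = 1 := by
      simp [pPoint]
    have hpz : ∀ x : ℤ, x ≠ 0 → x ≠ (m:ℤ)-1 → pPoint m x = 0 := by
      intro x h1 h2
      simp [pPoint, h1, h2]
    -- the rank computation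
    refine aux_rank _ (fun l : Fin 3 => (⟨m+1+(l:ℕ), by have := l.isLt; omega⟩ :
      Fin (2*m+1+1))) ?_ ?_ ?_ ?_ ?_ ?_ <;>
      simp only [Matrix.of_apply]
    · -- entry (1,0) = 0
      rw [show ((0:Fin 3):ℕ) = 0 from rfl, show ((1:Fin 3):ℕ) = 1 from rfl,
        show (2*(m:ℤ) + ((1:ℕ):ℤ) - ((m+1+0 : ℕ):ℤ)) = (m:ℤ) from by push_cast; ring,
        hpz (m:ℤ) (by omega) (by omega), mul_zero]
    · -- entry (2,0) = 0
      rw [show ((0:Fin 3):ℕ) = 0 from rfl, show ((2:Fin 3):ℕ) = 2 from rfl,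
        show (2*(m:ℤ) + ((2:ℕ):ℤ) - ((m+1+0 : ℕ):ℤ)) = (m:ℤ)+1 from by push_cast; ring,
        hpz ((m:ℤ)+1) (by omega) (by omega), mul_zero]
    · -- entry (2,1) = 0
      rw [show ((1:Fin 3):ℕ) = 1 from rfl, show ((2:Fin 3):ℕ) = 2 from rfl,
        show (2*(m:ℤ) + ((2:ℕ):ℤ) - ((m+1+1 : ℕ):ℤ)) = (m:ℤ) from by push_cast; ring,
        hpz (m:ℤ) (by omega) (by omega), mul_zero]
    · -- entry (0,0) ≠ 0
      rw [show ((0:Fin 3):ℕ) = 0 from rfl,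
        show (2*(m:ℤ) + ((0:ℕ):ℤ) - ((m+1+0 : ℕ):ℤ)) = (m:ℤ)-1 from by push_cast; ring,
        hpm1, mul_one,
        show ((m+1+0 : ℕ):ℤ) = (m:ℤ)+1 from by push_cast; ring,
        show ((0:ℕ):ℤ) = (0:ℤ) from by norm_num]
      exact mul_ne_zero two_ne_zero hv0ne
    · -- entry (1,1) ≠ 0
      rw [show ((1:Fin 3):ℕ) = 1 from rfl,
        show (2*(m:ℤ) + ((1:ℕ):ℤ) - ((m+1+1 : ℕ):ℤ)) = (m:ℤ)-1 from by push_cast; ring,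
        hpm1, mul_one,
        show ((m+1+1 : ℕ):ℤ) = (m:ℤ)+2 from by push_cast; ring,
        show ((1:ℕ):ℤ) = (1:ℤ) from by norm_num]
      exact mul_ne_zero two_ne_zero hv1ne
    · -- entry (2,2) ≠ 0
      rw [show ((2:Fin 3):ℕ) = 2 from rfl,
        show (2*(m:ℤ) + ((2:ℕ):ℤ) - ((m+1+2 : ℕ):ℤ)) = (m:ℤ)-1 from by push_cast; ring,
        hpm1, mul_one,
        show ((m+1+2 : ℕ):ℤ) = (m:ℤ)+3 from by push_cast; ring,
        show ((2:ℕ):ℤ) = (2:ℤ) from by norm_num]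
      exact mul_ne_zero two_ne_zero hv2ne
end
end

section
/- Let r ≥ 8 be even and m = r/2 − 1 (so 2m = r − 2 and m ≥ 3). Then binom(2m, m−3)·(r−m+3) − binom(2m, m−2)·(r−m−2) ≠ 0; more precisely, for m ≥ 3 this quantity vanishes if and only if 2m = r. Consequently, for the canonical coefficient family with parameter λ ≠ 0 one has q_1(m−2, m+3) ≠ 0. -/
open Finset

noncomputable section

lemma aux_key (a : ℕ) :
    (Nat.choose (2*a+6) (a+1) : ℤ) * ((a:ℤ)+1) = (Nat.choose (2*a+6) a : ℤ) * ((a:ℤ)+6) := by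
  have h := Nat.choose_succ_right_eq (2*a+6) a
  have h2 : 2*a+6 - a = a + 6 := by omega
  rw [h2] at h
  exact_mod_cast h

lemma aux_lt (a : ℕ) : (Nat.choose (2*a+6) a : ℤ) < (Nat.choose (2*a+6) (a+1) : ℤ) := by
  have hpos : 0 < (Nat.choose (2*a+6) a : ℤ) := by
    exact_mod_cast Nat.choose_pos (by omega)
  have h := aux_key a
  nlinarith

lemma aux_iff (m' : ℕ) (r' : ℤ) (hm' : 3 ≤ m') :
    ((Nat.choose (2 * m') (m' - 3) : ℤ) * (r' - (m' : ℤ) + 3)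
        - (Nat.choose (2 * m') (m' - 2) : ℤ) * (r' - (m' : ℤ) - 2) = 0
      ↔ r' = 2 * (m' : ℤ)) := by
  obtain ⟨a, rfl⟩ : ∃ a, m' = a + 3 := ⟨m' - 3, by omega⟩
  have e1 : a + 3 - 3 = a := by omega
  have e2 : a + 3 - 2 = a + 1 := by omega
  have e3 : 2 * (a+3) = 2*a+6 := by ring
  rw [e1, e2, e3]
  have hkey := aux_key a
  have hlt := aux_lt a
  push_cast
  constructor
  · intro h
    have hz : ((Nat.choose (2*a+6) a : ℤ) - (Nat.choose (2*a+6) (a+1) : ℤ)) * (r' - 2*((a:ℤ)+3)) = 0 := by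
      linear_combination h + hkey
    rcases mul_eq_zero.mp hz with h' | h'
    · omega
    · linarith
  · rintro rfl
    linear_combination -hkey

/-- for `r ≥ 8` even and `m = r/2 - 1`, the quantity
`binom(2m,m-3)·(r-m+3) - binom(2m,m-2)·(r-m-2)` is nonzero; more precisely, for
`m ≥ 3` it vanishes iff `2m = r`; consequently `q_1(m-2, m+3) ≠ 0` for the canonical
family with `λ ≠ 0`. -/
theorem stmt16 (r m : ℕ) (hr : 8 ≤ r) (hrm : r = 2 * m + 2)
    (lam : ℂ) (hlam : lam ≠ 0)
    (q : ℤ → ℤ → ℤ → ℂ) (hq : IsCanonical r m lam q) :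
    ((Nat.choose (2 * m) (m - 3) : ℤ) * ((r : ℤ) - (m : ℤ) + 3)
      - (Nat.choose (2 * m) (m - 2) : ℤ) * ((r : ℤ) - (m : ℤ) - 2) ≠ 0) ∧
    (∀ (m' : ℕ) (r' : ℤ), 3 ≤ m' →
      ((Nat.choose (2 * m') (m' - 3) : ℤ) * (r' - (m' : ℤ) + 3)
          - (Nat.choose (2 * m') (m' - 2) : ℤ) * (r' - (m' : ℤ) - 2) = 0
        ↔ r' = 2 * (m' : ℤ))) ∧
    q 1 ((m : ℤ) - 2) ((m : ℤ) + 3) ≠ 0 := by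
  have hm3 : 3 ≤ m := by omega
  have hne : ((Nat.choose (2 * m) (m - 3) : ℤ) * ((r : ℤ) - (m : ℤ) + 3)
      - (Nat.choose (2 * m) (m - 2) : ℤ) * ((r : ℤ) - (m : ℤ) - 2) ≠ 0) := by
    intro h
    have := (aux_iff m r hm3).mp h
    omega
  refine ⟨hne, fun m' r' hm' => aux_iff m' r' hm', ?_⟩
  obtain ⟨⟨hvan, hR1, hR2, hR3⟩, hq0⟩ := hq
  have hfam : famN r m = 4 := by simp only [famN]; omega
  have hb := hR2 0 ((m:ℤ)-2) ((m:ℤ)+3) le_rfl (by rw [hfam]; norm_num)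
    (by omega) (by omega) (by omega) (by omega)
  have hi1 : (m:ℤ) - 2 - 1 = (m:ℤ) - 3 := by ring
  have hj1 : (m:ℤ) + 3 - 1 = (m:ℤ) + 2 := by ring
  rw [hi1, hj1, hfam] at hb
  have hv1 := hq0 ((m:ℤ)-3) ((m:ℤ)+3) (by omega) (by omega) (by omega) (by omega)
  have hv2 := hq0 ((m:ℤ)-2) ((m:ℤ)+2) (by omega) (by omega) (by omega) (by omega)
  rw [if_pos (by omega : (m:ℤ)-3 + ((m:ℤ)+3) = 2*(m:ℤ))] at hv1
  rw [if_pos (by omega : (m:ℤ)-2 + ((m:ℤ)+2) = 2*(m:ℤ))] at hv2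
  have hb1 : binomZ (2*(m:ℤ)) ((m:ℤ)-3) = (Nat.choose (2*m) (m-3) : ℂ) := by
    rw [binomZ, if_pos ⟨by omega, by omega⟩]
    norm_num
    congr 1 <;> omega
  have hb2 : binomZ (2*(m:ℤ)) ((m:ℤ)-2) = (Nat.choose (2*m) (m-2) : ℂ) := by
    rw [binomZ, if_pos ⟨by omega, by omega⟩]
    norm_num
    congr 1 <;> omega
  have ht3 : ((m:ℤ)-3).toNat = m - 3 := by omega
  have ht2 : ((m:ℤ)-2).toNat = (m - 3) + 1 := by omega
  rw [hb1, ht3] at hv1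
  rw [hb2, ht2, pow_succ] at hv2
  rw [hv1, hv2] at hb
  intro h0
  rw [(by norm_num : (0:ℤ)+1 = 1), h0] at hb
  have hs : ((-1:ℂ)) ^ (m-3) ≠ 0 := pow_ne_zero _ (by norm_num)
  have hX : ((-1:ℂ)) ^ (m-3) * lam *
      ((Nat.choose (2*m) (m-3) : ℂ) * (((r:ℤ) - (m:ℤ) + 3 : ℤ) : ℂ)
        - (Nat.choose (2*m) (m-2) : ℂ) * (((r:ℤ) - (m:ℤ) - 2 : ℤ) : ℂ)) = 0 := by
    push_cast at hb ⊢
    linear_combination -hb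
  have hXz : ((Nat.choose (2*m) (m-3) : ℂ) * (((r:ℤ) - (m:ℤ) + 3 : ℤ) : ℂ)
        - (Nat.choose (2*m) (m-2) : ℂ) * (((r:ℤ) - (m:ℤ) - 2 : ℤ) : ℂ)) = 0 := by
    rcases mul_eq_zero.mp hX with h' | h'
    · rcases mul_eq_zero.mp h' with h'' | h''
      · exact absurd h'' hs
      · exact absurd h'' hlam
    · exact h'
  apply hne
  have : (((Nat.choose (2 * m) (m - 3) : ℤ) * ((r : ℤ) - (m : ℤ) + 3)
      - (Nat.choose (2 * m) (m - 2) : ℤ) * ((r : ℤ) - (m : ℤ) - 2) : ℤ) : ℂ) = 0 := by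
    push_cast at hXz ⊢
    linear_combination hXz
  exact_mod_cast this
end
end
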